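/- arXiv:2109.03677 — 10 statements merged into one kernel-verified Lean document; each statement's English description precedes it below -/
import Mathlib

section
/- Let (α, τ, η) : ℝ → ℝ³ with τ(s) = b constant, solving α' = τ, τ' = (c + aτ)α - η, η' = -(c + aτ)τ (a > 0, c ∈ ℝ), and suppose 2α(s)η(s) + τ(s)² = γ with γ ∈ {-1, 0, 1}. Then b ∈ {-1, 0, 1}. Moreover, if b = 0 then α is a constant α₀ and η = cα₀ (with γ determined by the sign of c: γ = -1 iff c < 0, γ = 0 iff c = 0, γ = 1 iff c > 0, assuming α₀ ≠ 0 when needed); and if b² = 1 then c + ab = 0 (so a² = c²), η ≡ 0, α(s) = bs + α₀, and γ = 1. -/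
/-!
Since `τ ≡ b`, the equation for `τ'` forces `η = (c + a b) α`, and `α' = b` makes `α` affine.
The constraint then reads `2 (c + a b) (b s + α₀)² + b² = γ` for all `s`; when `b ≠ 0` the
square ranges over both `0` and `1`, so `c + a b = 0` and `b² = γ`, leaving `γ = 1`.
When `b = 0` it reads `γ = 2 c α₀²`, so `γ` has the sign of `c`.
-/

theorem eq_mul_add_of_hasDerivAt {f : ℝ → ℝ} {b : ℝ} (hf : ∀ s, HasDerivAt f b s) (s : ℝ) :
    f s = b * s + f 0 := by
  have hg : ∀ x, HasDerivAt (fun x => f x - b * x) 0 x := fun x => by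
    have := (hf x).sub ((hasDerivAt_id' x).const_mul b)
    rwa [mul_one, sub_self] at this
  have := is_const_of_deriv_eq_zero (fun x => (hg x).differentiableAt) (fun x => (hg x).deriv) s 0
  simp only [mul_zero, sub_zero] at this
  linarith

theorem eq_zero_of_mul_sq_affine_eq_const {k b A C : ℝ} (hb : b ≠ 0)
    (h : ∀ s, k * (b * s + A) ^ 2 = C) : k = 0 := by
  have h₀ := h (-A / b)
  have h₁ := h ((1 - A) / b)
  rw [mul_div_cancel₀ _ hb] at h₀ h₁
  linarith

theorem eq_one_of_sq_eq {b γ : ℝ} (hγ : γ = -1 ∨ γ = 0 ∨ γ = 1) (hb : b ≠ 0) (h : b ^ 2 = γ) :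
    γ = 1 := by
  have : 0 < b ^ 2 := by positivity
  rcases hγ with rfl | rfl | rfl <;> linarith

theorem iff_sign_of_eq_mul_sq {c A γ : ℝ} (hγ : γ = -1 ∨ γ = 0 ∨ γ = 1) (hA : A ≠ 0)
    (h : γ = 2 * c * A ^ 2) : (γ = -1 ↔ c < 0) ∧ (γ = 0 ↔ c = 0) ∧ (γ = 1 ↔ 0 < c) := by
  have hA2 : 0 < A ^ 2 := by positivity
  subst h
  refine ⟨⟨fun h => ?_, fun h => ?_⟩, ⟨fun h => ?_, fun h => ?_⟩, ⟨fun h => ?_, fun h => ?_⟩⟩ <;>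
    rcases hγ with h' | h' | h' <;> nlinarith

theorem stmt_5_general (a c b γ : ℝ) (α τ η : ℝ → ℝ)
    (hb : ∀ s : ℝ, τ s = b)
    (hα : ∀ s : ℝ, HasDerivAt α (τ s) s)
    (hτ : ∀ s : ℝ, HasDerivAt τ ((c + a * τ s) * α s - η s) s)
    (hγ : γ = -1 ∨ γ = 0 ∨ γ = 1)
    (hcon : ∀ s : ℝ, 2 * α s * η s + (τ s) ^ 2 = γ) :
    (b = -1 ∨ b = 0 ∨ b = 1) ∧
    (b = 0 → ∃ α₀ : ℝ, (∀ s : ℝ, α s = α₀) ∧ (∀ s : ℝ, η s = c * α₀) ∧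
      (α₀ ≠ 0 → ((γ = -1 ↔ c < 0) ∧ (γ = 0 ↔ c = 0) ∧ (γ = 1 ↔ 0 < c)))) ∧
    (b ^ 2 = 1 → (c + a * b = 0 ∧ a ^ 2 = c ^ 2 ∧ (∀ s : ℝ, η s = 0) ∧
      (∃ α₀ : ℝ, ∀ s : ℝ, α s = b * s + α₀) ∧ γ = 1)) := by
  have hτ₀ : ∀ s, HasDerivAt τ 0 s := by
    rw [funext hb]; exact fun s => hasDerivAt_const s b
  have hη : ∀ s, η s = (c + a * b) * α s := fun s => by
    have := (hτ s).unique (hτ₀ s)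
    rw [hb] at this
    linarith
  have hα_affine : ∀ s, α s = b * s + α 0 := eq_mul_add_of_hasDerivAt fun s => hb s ▸ hα s
  have hcon' : ∀ s, 2 * (c + a * b) * (b * s + α 0) ^ 2 = γ - b ^ 2 := fun s => by
    rw [← hα_affine, ← hcon s, hη, hb]; ring
  have hk : b ≠ 0 → c + a * b = 0 := fun hb₀ => by
    linarith [eq_zero_of_mul_sq_affine_eq_const hb₀ hcon']
  have hb_sq : b ≠ 0 → b ^ 2 = γ := fun hb₀ => by
    have := hcon' 0
    rw [hk hb₀, mul_zero, zero_mul] at this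
    linarith
  have hγ_one : b ≠ 0 → γ = 1 := fun hb₀ => eq_one_of_sq_eq hγ hb₀ (hb_sq hb₀)
  refine ⟨?_, fun hb₀ => ⟨α 0, ?_, ?_, ?_⟩, fun hb₂ => ?_⟩
  · rcases eq_or_ne b 0 with h | h
    · exact .inr (.inl h)
    · rcases sq_eq_one_iff.mp ((hb_sq h).trans (hγ_one h)) with h | h
      exacts [.inr (.inr h), .inl h]
  · intro s; rw [hα_affine s, hb₀, zero_mul, zero_add]
  · intro s; rw [hη, hα_affine s, hb₀]; ring
  · intro hA
    have := hcon' 0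
    rw [hb₀] at this
    exact iff_sign_of_eq_mul_sq hγ hA (by linarith)
  · have hb₀ : b ≠ 0 := by rintro rfl; norm_num at hb₂
    have hc : c = -(a * b) := by linarith [hk hb₀]
    refine ⟨hk hb₀, ?_, fun s => by rw [hη, hk hb₀, zero_mul], ⟨α 0, hα_affine⟩, hγ_one hb₀⟩
    rw [hc, neg_sq, mul_pow, hb₂, mul_one]

/-- Classification of solutions with constant `τ ≡ b` of the system
`α' = τ`, `τ' = (c+aτ)α - η`, `η' = -(c+aτ)τ` subject to `2αη + τ² = γ ∈ {-1,0,1}`. -/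
theorem stmt_5 (a c b γ : ℝ) (ha : 0 < a) (α τ η : ℝ → ℝ)
    (hb : ∀ s : ℝ, τ s = b)
    (hα : ∀ s : ℝ, HasDerivAt α (τ s) s)
    (hτ : ∀ s : ℝ, HasDerivAt τ ((c + a * τ s) * α s - η s) s)
    (hη : ∀ s : ℝ, HasDerivAt η (-((c + a * τ s) * τ s)) s)
    (hγ : γ = -1 ∨ γ = 0 ∨ γ = 1)
    (hcon : ∀ s : ℝ, 2 * α s * η s + (τ s) ^ 2 = γ) :
    (b = -1 ∨ b = 0 ∨ b = 1) ∧
    (b = 0 → ∃ α₀ : ℝ, (∀ s : ℝ, α s = α₀) ∧ (∀ s : ℝ, η s = c * α₀) ∧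
      (α₀ ≠ 0 → ((γ = -1 ↔ c < 0) ∧ (γ = 0 ↔ c = 0) ∧ (γ = 1 ↔ 0 < c)))) ∧
    (b ^ 2 = 1 → (c + a * b = 0 ∧ a ^ 2 = c ^ 2 ∧ (∀ s : ℝ, η s = 0) ∧
      (∃ α₀ : ℝ, ∀ s : ℝ, α s = b * s + α₀) ∧ γ = 1)) :=
  stmt_5_general a c b γ α τ η hb hα hτ hγ hcon
end

section
/- Let (α, τ, η) solve α' = τ, τ' = (c + aτ)α - η, η' = -(c + aτ)τ with a > 0, c ≥ 0, and suppose α(s) ≤ 0 and η(s) ≥ 0 for all s (initial condition in H ∪ C), with the solution non-trivial (τ not constant). If s₀ is a critical point of α (i.e., τ(s₀) = 0), then α''(s₀) = cα(s₀) - η(s₀) < 0, so s₀ is a strict local maximum of α. -/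
/-!
At a critical point `τ(s₀) = 0` the equation for `τ'` gives `α''(s₀) = cα(s₀) - η(s₀)`, which
is `≤ 0` by the sign conditions. If it were `0`, then `τ`, `η` and `cα` would all vanish at `s₀`;
since `(τ, η, cα)` solves a linear system with locally bounded coefficients, Grönwall's
inequality forces it to vanish identically, so `τ ≡ 0`, contradicting non-triviality. With
`α' = τ` and `τ'(s₀) < 0`, the mean value theorem makes `s₀` a strict local maximum of `α`.
-/

open Set Filter Topology

theorem eqOn_zero_of_norm_deriv_le_mul_norm {E : Type*} [NormedAddCommGroup E] [NormedSpace ℝ E]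
    {f f' : ℝ → E} {K a b t₀ : ℝ} (hf : ∀ t ∈ Icc a b, HasDerivAt f (f' t) t)
    (bound : ∀ t ∈ Icc a b, ‖f' t‖ ≤ K * ‖f t‖) (ht₀ : t₀ ∈ Icc a b) (h0 : f t₀ = 0) :
    EqOn f 0 (Icc a b) := by
  intro t ht
  rcases le_total t₀ t with h | h
  · have hsub : Icc t₀ b ⊆ Icc a b := Icc_subset_Icc_left ht₀.1
    exact eq_zero_of_abs_deriv_le_mul_abs_self_of_eq_zero_right
      (fun x hx => (hf x (hsub hx)).continuousAt.continuousWithinAt)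
      (fun x hx => (hf x (hsub (Ico_subset_Icc_self hx))).hasDerivWithinAt) h0
      (fun x hx => bound x (hsub (Ico_subset_Icc_self hx))) t ⟨h, ht.2⟩
  · -- run time backwards: `t ↦ f (-t)` vanishes at `-t₀` and satisfies the same bound
    have hsub : ∀ x ∈ Icc (-t₀) (-a), -x ∈ Icc a b := fun x hx =>
      ⟨le_neg.mp hx.2, (neg_le.mp hx.1).trans ht₀.2⟩
    have hrev : ∀ x ∈ Icc (-t₀) (-a), HasDerivAt (fun x => f (-x)) (-f' (-x)) x := fun x hx => by
      simpa [Function.comp_def] using (hf (-x) (hsub x hx)).scomp x (hasDerivAt_neg x)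
    simpa using eq_zero_of_abs_deriv_le_mul_abs_self_of_eq_zero_right
      (fun x hx => (hrev x hx).continuousAt.continuousWithinAt)
      (fun x hx => (hrev x (Ico_subset_Icc_self hx)).hasDerivWithinAt) (by simpa using h0)
      (fun x hx => by simpa using bound (-x) (hsub x (Ico_subset_Icc_self hx)))
      (-t) ⟨neg_le_neg h, neg_le_neg ht.1⟩

theorem norm_rhs_le_mul_norm {a c M x y z : ℝ} (hx : |x| ≤ M) (hy : |y| ≤ M) :
    ‖((c + a * y) * x - z, -((c + a * y) * y), c * y)‖ ≤
      (2 + |c| + |a| * M) * ‖(y, z, c * x)‖ := by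
  set N := ‖(y, z, c * x)‖
  have hM : 0 ≤ M := (abs_nonneg x).trans hx
  have hyN : |y| ≤ N := norm_fst_le (y, z, c * x)
  have hzN : |z| ≤ N := (norm_fst_le (z, c * x)).trans (norm_snd_le (y, z, c * x))
  have hcxN : |c * x| ≤ N := (norm_snd_le (z, c * x)).trans (norm_snd_le (y, z, c * x))
  have hayx : |a * y * x| ≤ |a| * M * N := by
    rw [abs_mul, abs_mul, mul_right_comm]
    exact mul_le_mul (mul_le_mul_of_nonneg_left hx (abs_nonneg a)) hyN (abs_nonneg y) (by positivity)
  have hcy : |c * y| ≤ |c| * N := by rw [abs_mul]; exact mul_le_mul_of_nonneg_left hyN (abs_nonneg c)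
  have hayy : |a * y * y| ≤ |a| * M * N := by
    rw [abs_mul, abs_mul]
    exact mul_le_mul (mul_le_mul_of_nonneg_left hy (abs_nonneg a)) hyN (abs_nonneg y) (by positivity)
  have hN : 0 ≤ N := norm_nonneg _
  have haMN : 0 ≤ |a| * M * N := by positivity
  have hcN : 0 ≤ |c| * N := by positivity
  refine norm_prod_le_iff.mpr ⟨?_, norm_prod_le_iff.mpr ⟨?_, ?_⟩⟩ <;> simp only [Real.norm_eq_abs]
  · calc |(c + a * y) * x - z| = |c * x + a * y * x + -z| := by ring_nf
      _ ≤ |c * x| + |a * y * x| + |z| := by simpa using abs_add_three (c * x) (a * y * x) (-z)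
      _ ≤ _ := by linarith
  · calc |-((c + a * y) * y)| = |c * y + a * y * y| := by rw [abs_neg]; ring_nf
      _ ≤ |c * y| + |a * y * y| := abs_add_le _ _
      _ ≤ _ := by linarith
  · linarith

theorem eventually_lt_of_hasDerivAt_of_deriv_neg {f g : ℝ → ℝ} {x₀ d : ℝ}
    (hf : ∀ᶠ x in 𝓝 x₀, HasDerivAt f (g x) x) (hg₀ : g x₀ = 0) (hg : HasDerivAt g d x₀)
    (hd : d < 0) : ∀ᶠ x in 𝓝[≠] x₀, f x < f x₀ := by
  have hsign := eventually_nhdsWithin_sign_eq_of_deriv_neg (hg.deriv ▸ hd) hg₀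
  obtain ⟨ε, hε, hball⟩ := Metric.eventually_nhds_iff_ball.mp (hf.and hsign)
  rw [Real.ball_eq_Ioo] at hball
  have mvt : ∀ {u v}, u < v → Icc u v ⊆ Ioo (x₀ - ε) (x₀ + ε) →
      ∃ ξ ∈ Ioo u v, g ξ = (f v - f u) / (v - u) ∧ SignType.sign (g ξ) = SignType.sign (x₀ - ξ) :=
    fun huv hsub => by
      obtain ⟨ξ, hξ, heq⟩ := exists_hasDerivAt_eq_slope f g huv
        (fun y hy => (hball y (hsub hy)).1.continuousAt.continuousWithinAt)
        (fun y hy => (hball y (hsub (Ioo_subset_Icc_self hy))).1)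
      exact ⟨ξ, hξ, heq, (hball ξ (hsub (Ioo_subset_Icc_self hξ))).2⟩
  filter_upwards [nhdsWithin_le_nhds (Ioo_mem_nhds (sub_lt_self x₀ hε) (lt_add_of_pos_right x₀ hε)),
    self_mem_nhdsWithin] with x hx hne
  rcases lt_or_gt_of_ne hne with hlt | hgt
  · obtain ⟨ξ, hξ, heq, hs⟩ := mvt hlt (Icc_subset_Ioo hx.1 (by linarith))
    have : 0 < g ξ := sign_eq_one_iff.mp (hs.trans (sign_pos (sub_pos.mpr hξ.2)))
    rw [heq, lt_div_iff₀ (sub_pos.mpr hlt), zero_mul] at this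
    linarith
  · obtain ⟨ξ, hξ, heq, hs⟩ := mvt hgt (Icc_subset_Ioo (by linarith) hx.2)
    have : g ξ < 0 := sign_eq_neg_one_iff.mp (hs.trans (sign_neg (sub_neg.mpr hξ.1)))
    rw [heq, div_lt_iff₀ (sub_pos.mpr hgt), zero_mul] at this
    linarith

theorem tau_eqOn_zero_of_eq_zero {lo hi a c s₀ : ℝ} {α τ η : ℝ → ℝ}
    (hα : ∀ s ∈ Ioo lo hi, HasDerivAt α (τ s) s)
    (hτ : ∀ s ∈ Ioo lo hi, HasDerivAt τ ((c + a * τ s) * α s - η s) s)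
    (hη : ∀ s ∈ Ioo lo hi, HasDerivAt η (-((c + a * τ s) * τ s)) s)
    (hs₀ : s₀ ∈ Ioo lo hi) (hτ₀ : τ s₀ = 0) (hη₀ : η s₀ = 0) (hα₀ : c * α s₀ = 0) :
    EqOn τ 0 (Ioo lo hi) := by
  intro s hs
  have hsub : Icc (min s s₀) (max s s₀) ⊆ Ioo lo hi :=
    Icc_subset_Ioo (lt_min hs.1 hs₀.1) (max_lt hs.2 hs₀.2)
  obtain ⟨M, hM⟩ := isCompact_Icc.exists_bound_of_continuousOn (f := fun t => (α t, τ t))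
    fun t ht => ((hα t (hsub ht)).continuousAt.prodMk (hτ t (hsub ht)).continuousAt).continuousWithinAt
  have hF : ∀ t ∈ Icc (min s s₀) (max s s₀), HasDerivAt (fun t => (τ t, η t, c * α t))
      ((c + a * τ t) * α t - η t, -((c + a * τ t) * τ t), c * τ t) t := fun t ht =>
    (hτ t (hsub ht)).prodMk ((hη t (hsub ht)).prodMk ((hα t (hsub ht)).const_mul c))
  have hzero := eqOn_zero_of_norm_deriv_le_mul_norm hF
    (fun t ht => norm_rhs_le_mul_norm ((norm_fst_le _).trans (hM t ht)) ((norm_snd_le _).trans (hM t ht)))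
    ⟨min_le_right s s₀, le_max_right s s₀⟩ (by simp [hτ₀, hη₀, hα₀])
    ⟨min_le_left s s₀, le_max_left s s₀⟩
  exact congrArg Prod.fst hzero

theorem stmt_6_general (lo hi a c : ℝ) (hc : 0 ≤ c) (α τ η : ℝ → ℝ)
    (hα : ∀ s ∈ Set.Ioo lo hi, HasDerivAt α (τ s) s)
    (hτ : ∀ s ∈ Set.Ioo lo hi, HasDerivAt τ ((c + a * τ s) * α s - η s) s)
    (hη : ∀ s ∈ Set.Ioo lo hi, HasDerivAt η (-((c + a * τ s) * τ s)) s)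
    (hsign : ∀ s ∈ Set.Ioo lo hi, α s ≤ 0 ∧ 0 ≤ η s)
    (hnt : ¬ ∃ b : ℝ, ∀ s ∈ Set.Ioo lo hi, τ s = b)
    (s₀ : ℝ) (hs₀ : s₀ ∈ Set.Ioo lo hi) (hcrit : τ s₀ = 0) :
    HasDerivAt τ (c * α s₀ - η s₀) s₀ ∧
    c * α s₀ - η s₀ < 0 ∧
    ∀ᶠ s in nhdsWithin s₀ {s₀}ᶜ, α s < α s₀ := by
  have hτ₀ : HasDerivAt τ (c * α s₀ - η s₀) s₀ := by simpa [hcrit] using hτ s₀ hs₀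
  have hneg : c * α s₀ - η s₀ < 0 := by
    obtain ⟨hα₀, hη₀⟩ := hsign s₀ hs₀
    have hcα : c * α s₀ ≤ 0 := mul_nonpos_of_nonneg_of_nonpos hc hα₀
    refine lt_of_le_of_ne (by linarith) fun h => hnt ⟨0, ?_⟩
    exact tau_eqOn_zero_of_eq_zero hα hτ hη hs₀ hcrit (by linarith) (by linarith)
  refine ⟨hτ₀, hneg, eventually_lt_of_hasDerivAt_of_deriv_neg ?_ hcrit hτ₀ hneg⟩
  filter_upwards [Ioo_mem_nhds hs₀.1 hs₀.2] with s hs using hα s hs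

/-- For a non-trivial solution with `c ≥ 0` staying in `H ∪ C` (so `α ≤ 0`, `η ≥ 0`),
any critical point of `α` satisfies `α'' = cα - η < 0` and is a strict local maximum. -/
theorem stmt_6 (lo hi a c : ℝ) (ha : 0 < a) (hc : 0 ≤ c) (α τ η : ℝ → ℝ)
    (hα : ∀ s ∈ Set.Ioo lo hi, HasDerivAt α (τ s) s)
    (hτ : ∀ s ∈ Set.Ioo lo hi, HasDerivAt τ ((c + a * τ s) * α s - η s) s)
    (hη : ∀ s ∈ Set.Ioo lo hi, HasDerivAt η (-((c + a * τ s) * τ s)) s)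
    (hsign : ∀ s ∈ Set.Ioo lo hi, α s ≤ 0 ∧ 0 ≤ η s)
    (hnt : ¬ ∃ b : ℝ, ∀ s ∈ Set.Ioo lo hi, τ s = b)
    (s₀ : ℝ) (hs₀ : s₀ ∈ Set.Ioo lo hi) (hcrit : τ s₀ = 0) :
    HasDerivAt τ (c * α s₀ - η s₀) s₀ ∧
    c * α s₀ - η s₀ < 0 ∧
    ∀ᶠ s in nhdsWithin s₀ {s₀}ᶜ, α s < α s₀ :=
  stmt_6_general lo hi a c hc α τ η hα hτ hη hsign hnt s₀ hs₀ hcrit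
end

section
/- Let (α, τ, η) be a non-trivial solution of α' = τ, τ' = (c + aτ)α - η, η' = -(c + aτ)τ with a > 0 and c = 0. If s₀ is a critical point of τ (τ'(s₀) = 0), then τ''(s₀) = 2aτ(s₀)² > 0, hence s₀ is a strict local minimum of τ. -/
/-!
If `τ(s₀) = 0` at a critical point, then also `η(s₀) = 0`, so `(α(s₀), 0, 0)` is an equilibrium
of the (smooth, autonomous) system and uniqueness of ODE solutions forces `τ ≡ 0`. Hence
`τ(s₀) ≠ 0`. Differentiating `τ' = aτα - η` and using `τ'(s₀) = 0` gives
`τ''(s₀) = 2aτ(s₀)² > 0`, and a strict second-derivative test (via the mean value theorem)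
yields the strict local minimum.
-/

open Set Filter Topology

theorem eventuallyEq_const_of_hasDerivAt_of_eq_zero {E : Type*} [NormedAddCommGroup E]
    [NormedSpace ℝ E] {v : E → E} {f : ℝ → E} {t₀ : ℝ} (hv : ContDiffAt ℝ 1 v (f t₀))
    (hf : ∀ᶠ t in 𝓝 t₀, HasDerivAt f (v (f t)) t) (hv₀ : v (f t₀) = 0) :
    f =ᶠ[𝓝 t₀] fun _ ↦ f t₀ := by
  obtain ⟨K, U, hU, hK⟩ := hv.exists_lipschitzOnWith
  refine ODE_solution_unique_of_eventually (v := fun _ ↦ v) (s := fun _ ↦ U)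
    (.of_forall fun _ ↦ hK) (hf.and (hf.self_of_nhds.continuousAt.eventually_mem hU))
    (.of_forall fun _ ↦ ⟨hv₀ ▸ hasDerivAt_const _ _, mem_of_mem_nhds hU⟩) rfl

-- The agreement set with the equilibrium is open by local uniqueness and closed by continuity.
theorem IsPreconnected.eqOn_const_of_hasDerivAt_of_eq_zero {E : Type*} [NormedAddCommGroup E]
    [NormedSpace ℝ E] {v : E → E} {f : ℝ → E} {I : Set ℝ} (hIo : IsOpen I)
    (hI : IsPreconnected I) (hf : ∀ t ∈ I, HasDerivAt f (v (f t)) t) {t₀ : ℝ} (ht₀ : t₀ ∈ I)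
    (hv : ContDiffAt ℝ 1 v (f t₀)) (hv₀ : v (f t₀) = 0) : EqOn f (fun _ ↦ f t₀) I := by
  have local_eq : ∀ t ∈ I, f t = f t₀ → ∀ᶠ t' in 𝓝 t, f t' = f t₀ := fun t ht heq ↦ by
    have := eventuallyEq_const_of_hasDerivAt_of_eq_zero (heq ▸ hv)
      (hIo.eventually_mem ht |>.mono hf) (heq ▸ hv₀)
    rwa [heq] at this
  have hsub : I ⊆ {t | ∀ᶠ t' in 𝓝 t, f t' = f t₀} := by
    refine hI.subset_of_closure_inter_subset isOpen_setOfPred_eventually_nhds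
      ⟨t₀, ht₀, local_eq t₀ ht₀ rfl⟩ fun t ⟨hcl, ht⟩ ↦ local_eq t ht ?_
    exact isClosed_singleton.mem_of_frequently_of_tendsto
      ((mem_closure_iff_frequently.mp hcl).mono fun _ h ↦ h.self_of_nhds)
      (hf t ht).continuousAt.tendsto
  exact fun t ht ↦ (hsub ht).self_of_nhds

theorem eventually_nhdsNE_lt_of_hasDerivAt_of_hasDerivAt_pos {f f' : ℝ → ℝ} {x₀ c : ℝ}
    (hf : ∀ᶠ x in 𝓝 x₀, HasDerivAt f (f' x) x) (hf'₀ : f' x₀ = 0) (hf' : HasDerivAt f' c x₀)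
    (hc : 0 < c) : ∀ᶠ x in 𝓝[≠] x₀, f x₀ < f x := by
  have hslope : ∀ᶠ x in 𝓝[≠] x₀, 0 < slope f' x₀ x :=
    (hasDerivAt_iff_tendsto_slope.mp hf').eventually (eventually_gt_nhds hc)
  obtain ⟨ε, hε, hball⟩ :=
    Metric.eventually_nhds_iff_ball.mp (hf.and (eventually_nhdsWithin_iff.mp hslope))
  have mvt : ∀ a b, a < b → a ∈ Metric.ball x₀ ε → b ∈ Metric.ball x₀ ε →
      ∃ y ∈ Ioo a b, y ∈ Metric.ball x₀ ε ∧ f b - f a = f' y * (b - a) := by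
    intro a b hab ha hb
    have hIcc : Icc a b ⊆ Metric.ball x₀ ε := (convex_ball x₀ ε).ordConnected.out ha hb
    obtain ⟨y, hy, hfy⟩ := exists_hasDerivAt_eq_slope f f' hab
      (HasDerivAt.continuousOn fun y hy ↦ (hball y (hIcc hy)).1)
      fun y hy ↦ (hball y (hIcc (Ioo_subset_Icc_self hy))).1
    refine ⟨y, hy, hIcc (Ioo_subset_Icc_self hy), ?_⟩
    rw [hfy, div_mul_cancel₀ _ (sub_ne_zero.mpr hab.ne')]
  filter_upwards [nhdsWithin_le_nhds (Metric.ball_mem_nhds x₀ hε), self_mem_nhdsWithin]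
    with x hx hne
  rcases lt_or_gt_of_ne hne with hlt | hgt
  · obtain ⟨y, hy, hyε, hfy⟩ := mvt x x₀ hlt hx (Metric.mem_ball_self hε)
    have : f' y < 0 := neg_of_slope_pos hy.2 ((hball y hyε).2 hy.2.ne) hf'₀
    nlinarith
  · obtain ⟨y, hy, hyε, hfy⟩ := mvt x₀ x hgt (Metric.mem_ball_self hε) hx
    have : 0 < f' y := pos_of_slope_pos hy.1 ((hball y hyε).2 hy.1.ne') hf'₀
    nlinarith

theorem tau_eqOn_zero_of_tau_eta_eq_zero {a : ℝ} {α τ η : ℝ → ℝ} {I : Set ℝ} (hIo : IsOpen I)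
    (hI : IsPreconnected I) (hα : ∀ s ∈ I, HasDerivAt α (τ s) s)
    (hτ : ∀ s ∈ I, HasDerivAt τ (a * τ s * α s - η s) s)
    (hη : ∀ s ∈ I, HasDerivAt η (-(a * (τ s) ^ 2)) s) {s₀ : ℝ} (hs₀ : s₀ ∈ I)
    (hτ₀ : τ s₀ = 0) (hη₀ : η s₀ = 0) : EqOn τ 0 I := by
  let v : ℝ × ℝ × ℝ → ℝ × ℝ × ℝ := fun p ↦ (p.2.1, a * p.2.1 * p.1 - p.2.2, -(a * p.2.1 ^ 2))
  have hv : ContDiff ℝ 1 v := by fun_prop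
  have hconst := hI.eqOn_const_of_hasDerivAt_of_eq_zero (v := v) (f := fun s ↦ (α s, τ s, η s))
    hIo (fun s hs ↦ (hα s hs).prodMk ((hτ s hs).prodMk (hη s hs))) hs₀ hv.contDiffAt
    (by simp [v, hτ₀, hη₀])
  exact fun s hs ↦ (congrArg (·.2.1) (hconst hs)).trans hτ₀

/-- For a non-trivial solution with `c = 0`, at a critical point `s₀` of `τ` one has
`τ''(s₀) = 2aτ(s₀)² > 0`, hence `s₀` is a strict local minimum of `τ`. -/
theorem stmt_7 (lo hi a : ℝ) (ha : 0 < a) (α τ η : ℝ → ℝ)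
    (hα : ∀ s ∈ Set.Ioo lo hi, HasDerivAt α (τ s) s)
    (hτ : ∀ s ∈ Set.Ioo lo hi, HasDerivAt τ (a * τ s * α s - η s) s)
    (hη : ∀ s ∈ Set.Ioo lo hi, HasDerivAt η (-(a * (τ s) ^ 2)) s)
    (hnt : ¬ ∃ b : ℝ, ∀ s ∈ Set.Ioo lo hi, τ s = b)
    (s₀ : ℝ) (hs₀ : s₀ ∈ Set.Ioo lo hi)
    (hcrit : a * τ s₀ * α s₀ - η s₀ = 0) :
    HasDerivAt (fun u => a * τ u * α u - η u) (2 * a * (τ s₀) ^ 2) s₀ ∧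
    0 < 2 * a * (τ s₀) ^ 2 ∧
    ∀ᶠ s in nhdsWithin s₀ {s₀}ᶜ, τ s₀ < τ s := by
  have hτ₀ : τ s₀ ≠ 0 := fun hτ₀ ↦ hnt ⟨0, tau_eqOn_zero_of_tau_eta_eq_zero isOpen_Ioo
    isPreconnected_Ioo hα hτ hη hs₀ hτ₀ (by simpa [hτ₀] using hcrit)⟩
  have hτ'' : HasDerivAt (fun u => a * τ u * α u - η u) (2 * a * (τ s₀) ^ 2) s₀ :=
    (((hτ s₀ hs₀).const_mul a).mul (hα s₀ hs₀)).sub (hη s₀ hs₀) |>.congr_deriv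
      (by rw [hcrit]; ring)
  have hpos : 0 < 2 * a * (τ s₀) ^ 2 := by positivity
  exact ⟨hτ'', hpos, eventually_nhdsNE_lt_of_hasDerivAt_of_hasDerivAt_pos
    (eventually_of_mem (Ioo_mem_nhds hs₀.1 hs₀.2) hτ) hcrit hτ'' hpos⟩
end

section
/- Let (α, τ, η) be a solution of α' = τ, τ' = (c + aτ)α - η, η' = -(c + aτ)τ with a > 0 and c ≥ 0, defined on an interval I. If s₀ ∈ I satisfies τ(s₀) = 0 and τ'(s₀) > 0, and whenever τ > 0 every critical point of τ is a strict local minimum (which holds since (c + aτ)τ > 0 there), then τ(s) > 0 for all s > s₀ in I. Consequently τ has at most two zeros on I. -/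
/-!
Where `τ > 0` we have `τ'' = 2 (c + a τ) τ > 0` at every critical point of `τ`, so `τ` has no
positive local maximum. If `τ` vanished again after a zero `s₀` with `τ'(s₀) > 0`, its maximum
between the two zeros would be such a maximum. Given three zeros `p < q < r`, the middle one is
excluded in the same way according to the sign of `τ'(q)`: if `τ'(q) > 0`, by the first part
applied at `q`; if `τ'(q) < 0`, by the maximum of `τ` on `[p, q]`; and if `τ'(q) = 0`, then
`(τ, τ')` solves the linear system `τ'' = a α τ' + 2 (c + a τ) τ` with zero data at `q`, so `τ ≡ 0`.
-/

open Set Filter Topology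

theorem HasDerivAt.eventually_pos_right {f : ℝ → ℝ} {x d : ℝ} (hf : HasDerivAt f d x)
    (hx : f x = 0) (hd : 0 < d) : ∀ᶠ t in 𝓝[>] x, 0 < f t := by
  filter_upwards [nhdsGT_le_nhdsNE x
    ((hasDerivAt_iff_tendsto_slope.1 hf).eventually (eventually_gt_nhds hd)),
    self_mem_nhdsWithin] with t hslope (hxt : x < t)
  exact pos_of_slope_pos hxt hslope hx

theorem HasDerivAt.eventually_pos_left {f : ℝ → ℝ} {x d : ℝ} (hf : HasDerivAt f d x)
    (hx : f x = 0) (hd : d < 0) : ∀ᶠ t in 𝓝[<] x, 0 < f t := by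
  filter_upwards [nhdsLT_le_nhdsNE x
    ((hasDerivAt_iff_tendsto_slope.1 hf.neg).eventually (eventually_gt_nhds (neg_pos.2 hd))),
    self_mem_nhdsWithin] with t hslope (htx : t < x)
  simpa using neg_of_slope_pos htx hslope (by simp [hx])

theorem not_isLocalMax_of_deriv_deriv_pos {f : ℝ → ℝ} {x : ℝ} (hf : 0 < deriv (deriv f) x)
    (hd : deriv f x = 0) (hc : ContinuousAt f x) : ¬ IsLocalMax f x := by
  intro hmax
  have hconst : f =ᶠ[𝓝 x] fun _ => f x :=
    (hmax.and (isLocalMin_of_deriv_deriv_pos hf hd hc)).mono fun _ hy => le_antisymm hy.1 hy.2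
  have : deriv (deriv f) x = 0 := by rw [hconst.deriv.deriv_eq]; simp
  exact hf.ne' this

theorem exists_isLocalMax_pos_of_nonpos {f : ℝ → ℝ} {x y t : ℝ} (hf : ContinuousOn f (Icc x y))
    (hx : f x ≤ 0) (hy : f y ≤ 0) (ht : t ∈ Icc x y) (hft : 0 < f t) :
    ∃ m ∈ Ioo x y, 0 < f m ∧ IsLocalMax f m := by
  obtain ⟨m, hm, hmax⟩ := isCompact_Icc.exists_isMaxOn ⟨t, ht⟩ hf
  have hfm : 0 < f m := hft.trans_le (hmax ht)
  have hm' : m ∈ Ioo x y :=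
    ⟨hm.1.lt_of_ne (by rintro rfl; linarith), hm.2.lt_of_ne (by rintro rfl; linarith)⟩
  exact ⟨m, hm', hfm, hmax.isLocalMax (Icc_mem_nhds hm'.1 hm'.2)⟩

theorem lipschitzWith_companion {P R C : ℝ} (hP : |P| ≤ C) (hR : |R| ≤ C) :
    LipschitzWith (1 + 2 * C).toNNReal fun w : ℝ × ℝ => (w.2, P * w.2 + R * w.1) := by
  refine LipschitzWith.of_dist_le' fun w w' => ?_
  simp only [Prod.dist_eq, Real.dist_eq]
  set d := max |w.1 - w'.1| |w.2 - w'.2|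
  have h₁ : |w.1 - w'.1| ≤ d := le_max_left _ _
  have h₂ : |w.2 - w'.2| ≤ d := le_max_right _ _
  have hC : 0 ≤ C := (abs_nonneg P).trans hP
  have hsecond : |(P * w.2 + R * w.1) - (P * w'.2 + R * w'.1)| ≤ 2 * C * d :=
    calc |(P * w.2 + R * w.1) - (P * w'.2 + R * w'.1)|
        = |P * (w.2 - w'.2) + R * (w.1 - w'.1)| := by ring_nf
      _ ≤ |P| * |w.2 - w'.2| + |R| * |w.1 - w'.1| := by
          rw [← abs_mul, ← abs_mul]; exact abs_add_le _ _
      _ ≤ C * d + C * d := by gcongr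
      _ = 2 * C * d := by ring
  have hd : 0 ≤ d := (abs_nonneg _).trans h₁
  exact max_le (by nlinarith) (by nlinarith)

theorem eq_zero_of_linear_second_order_ode {u u' p r : ℝ → ℝ} {lo hi t₀ : ℝ}
    (hp : ContinuousOn p (Ioo lo hi)) (hr : ContinuousOn r (Ioo lo hi))
    (hu : ∀ t ∈ Ioo lo hi, HasDerivAt u (u' t) t)
    (hu' : ∀ t ∈ Ioo lo hi, HasDerivAt u' (p t * u' t + r t * u t) t)
    (ht₀ : t₀ ∈ Ioo lo hi) (h0 : u t₀ = 0) (h0' : u' t₀ = 0) :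
    ∀ t ∈ Ioo lo hi, u t = 0 := by
  intro t ht
  obtain ⟨a, hlo, ha⟩ := exists_between (lt_min ht.1 ht₀.1)
  obtain ⟨b, hb, hhi⟩ := exists_between (max_lt ht.2 ht₀.2)
  have hsub : Icc a b ⊆ Ioo lo hi := Icc_subset_Ioo hlo hhi
  obtain ⟨Cp, hCp⟩ := isCompact_Icc.exists_bound_of_continuousOn (hp.mono hsub)
  obtain ⟨Cr, hCr⟩ := isCompact_Icc.exists_bound_of_continuousOn (hr.mono hsub)
  let v : ℝ → ℝ × ℝ → ℝ × ℝ := fun s w => (w.2, p s * w.2 + r s * w.1)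
  have hv : ∀ s ∈ Ioo a b, LipschitzOnWith (1 + 2 * max Cp Cr).toNNReal (v s) univ :=
    fun s hs => (lipschitzWith_companion ((hCp s (Ioo_subset_Icc_self hs)).trans (le_max_left _ _))
      ((hCr s (Ioo_subset_Icc_self hs)).trans (le_max_right _ _))).lipschitzOnWith
  have hsol : ∀ s ∈ Icc a b, HasDerivAt (fun s => (u s, u' s)) (v s (u s, u' s)) s :=
    fun s hs => (hu s (hsub hs)).prodMk (hu' s (hsub hs))
  have heq := ODE_solution_unique_of_mem_Icc (g := fun _ => 0) hv
    ⟨ha.trans_le (min_le_right _ _), (le_max_right _ _).trans_lt hb⟩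
    (HasDerivAt.continuousOn hsol) (fun s hs => hsol s (Ioo_subset_Icc_self hs))
    (fun _ _ => mem_univ _) continuousOn_const (fun s _ => (hasDerivAt_const s 0).congr_deriv (by ext <;> simp [v])) (fun _ _ => mem_univ _)
    (by simp [h0, h0'])
    ⟨(min_le_left _ _).trans' ha.le, (le_max_left _ _).trans hb.le⟩
  exact congrArg Prod.fst heq

theorem eq_or_eq_or_eq_of_not_lt_lt {α : Type*} [LinearOrder α] {S : Set α}
    (hS : ∀ p ∈ S, ∀ q ∈ S, ∀ r ∈ S, p < q → q < r → False) :
    ∀ x ∈ S, ∀ y ∈ S, ∀ z ∈ S, x = y ∨ x = z ∨ y = z := by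
  intro x hx y hy z hz
  by_contra! hne
  rcases hne.1.lt_or_gt with hxy | hxy <;> rcases hne.2.1.lt_or_gt with hxz | hxz <;>
    rcases hne.2.2.lt_or_gt with hyz | hyz
  all_goals first
    | exact hS _ hx _ hy _ hz hxy hyz
    | exact hS _ hx _ hz _ hy hxz hyz
    | exact hS _ hy _ hx _ hz hxy hxz
    | exact hS _ hy _ hz _ hx hyz hxz
    | exact hS _ hz _ hx _ hy hxz hxy
    | exact hS _ hz _ hy _ hx hyz hxy

structure IsSolutionOn (a c : ℝ) (α τ η : ℝ → ℝ) (I : Set ℝ) : Prop where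
  hasDerivAt_α : ∀ s ∈ I, HasDerivAt α (τ s) s
  hasDerivAt_τ : ∀ s ∈ I, HasDerivAt τ ((c + a * τ s) * α s - η s) s
  hasDerivAt_η : ∀ s ∈ I, HasDerivAt η (-((c + a * τ s) * τ s)) s

namespace IsSolutionOn

variable {a c lo hi : ℝ} {α τ η : ℝ → ℝ}

theorem continuousOn_τ {I : Set ℝ} (h : IsSolutionOn a c α τ η I) : ContinuousOn τ I :=
  HasDerivAt.continuousOn h.hasDerivAt_τ

theorem hasDerivAt_deriv_τ {I : Set ℝ} (h : IsSolutionOn a c α τ η I) {s : ℝ} (hs : s ∈ I) :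
    HasDerivAt (fun t => (c + a * τ t) * α t - η t)
      (a * α s * ((c + a * τ s) * α s - η s) + 2 * (c + a * τ s) * τ s) s := by
  have hcoef := ((h.hasDerivAt_τ s hs).const_mul a).const_add c
  exact ((hcoef.mul (h.hasDerivAt_α s hs)).sub (h.hasDerivAt_η s hs)).congr_deriv (by ring)

theorem not_isLocalMax_of_τ_pos (h : IsSolutionOn a c α τ η (Ioo lo hi)) (ha : 0 < a)
    (hc : 0 ≤ c) {s : ℝ} (hs : s ∈ Ioo lo hi) (hpos : 0 < τ s) : ¬ IsLocalMax τ s := by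
  intro hmax
  have hτs := h.hasDerivAt_τ s hs
  have hcrit : (c + a * τ s) * α s - η s = 0 := hmax.hasDerivAt_eq_zero hτs
  have hderiv : deriv τ =ᶠ[𝓝 s] fun t => (c + a * τ t) * α t - η t := by
    filter_upwards [Ioo_mem_nhds hs.1 hs.2] with t ht using (h.hasDerivAt_τ t ht).deriv
  have hsecond : deriv (deriv τ) s = 2 * (c + a * τ s) * τ s := by
    rw [hderiv.deriv_eq, (h.hasDerivAt_deriv_τ hs).deriv, hcrit]; ring
  have hcoef : 0 < c + a * τ s := by positivity
  refine not_isLocalMax_of_deriv_deriv_pos ?_ (hτs.deriv.trans hcrit) hτs.continuousAt hmax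
  rw [hsecond]; positivity

theorem τ_pos_of_lt (h : IsSolutionOn a c α τ η (Ioo lo hi)) (ha : 0 < a) (hc : 0 ≤ c)
    {s₀ : ℝ} (hs₀ : s₀ ∈ Ioo lo hi) (h0 : τ s₀ = 0)
    (h1 : 0 < (c + a * τ s₀) * α s₀ - η s₀) {s : ℝ} (hs : s ∈ Ioo lo hi) (hlt : s₀ < s) :
    0 < τ s := by
  by_contra! hle
  obtain ⟨t, htpos, ht⟩ :=
    (((h.hasDerivAt_τ s₀ hs₀).eventually_pos_right h0 h1).and (Ioo_mem_nhdsGT hlt)).exists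
  obtain ⟨m, hm, hτm, hmax⟩ := exists_isLocalMax_pos_of_nonpos
    (h.continuousOn_τ.mono (Icc_subset_Ioo hs₀.1 hs.2)) h0.le hle (Ioo_subset_Icc_self ht) htpos
  exact h.not_isLocalMax_of_τ_pos ha hc (Ioo_subset_Ioo hs₀.1.le hs.2.le hm) hτm hmax

theorem τ_eq_zero_of_deriv_eq_zero (h : IsSolutionOn a c α τ η (Ioo lo hi)) {q : ℝ}
    (hq : q ∈ Ioo lo hi) (h0 : τ q = 0) (h0' : (c + a * τ q) * α q - η q = 0) :
    ∀ s ∈ Ioo lo hi, τ s = 0 := by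
  have hcont : ContinuousOn (fun t => a * α t) (Ioo lo hi) :=
    continuousOn_const.mul (HasDerivAt.continuousOn h.hasDerivAt_α)
  exact eq_zero_of_linear_second_order_ode hcont
    (continuousOn_const.mul (continuousOn_const.add (continuousOn_const.mul h.continuousOn_τ)))
    h.hasDerivAt_τ (fun s hs => h.hasDerivAt_deriv_τ hs) hq h0 h0'

theorem false_of_τ_eq_zero_of_lt_of_lt (h : IsSolutionOn a c α τ η (Ioo lo hi)) (ha : 0 < a)
    (hc : 0 ≤ c) (hnt : ¬ ∀ s ∈ Ioo lo hi, τ s = 0) {p q r : ℝ} (hp : p ∈ Ioo lo hi)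
    (hq : q ∈ Ioo lo hi) (hr : r ∈ Ioo lo hi) (hpq : p < q) (hqr : q < r)
    (hτp : τ p = 0) (hτq : τ q = 0) (hτr : τ r = 0) : False := by
  rcases lt_trichotomy ((c + a * τ q) * α q - η q) 0 with hneg | hzero | hpos
  · obtain ⟨t, htpos, ht⟩ :=
      (((h.hasDerivAt_τ q hq).eventually_pos_left hτq hneg).and (Ioo_mem_nhdsLT hpq)).exists
    obtain ⟨m, hm, hτm, hmax⟩ := exists_isLocalMax_pos_of_nonpos
      (h.continuousOn_τ.mono (Icc_subset_Ioo hp.1 hq.2)) hτp.le hτq.le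
      (Ioo_subset_Icc_self ht) htpos
    exact h.not_isLocalMax_of_τ_pos ha hc (Ioo_subset_Ioo hp.1.le hq.2.le hm) hτm hmax
  · exact hnt (h.τ_eq_zero_of_deriv_eq_zero hq hτq hzero)
  · exact (h.τ_pos_of_lt ha hc hq hτq hpos hr hqr).ne' hτr

end IsSolutionOn

/-- For `c ≥ 0`: if `τ(s₀) = 0` with `τ'(s₀) > 0` then `τ > 0` after `s₀`;
consequently `τ` has at most two zeros. -/
theorem stmt_9 (lo hi a c : ℝ) (ha : 0 < a) (hc : 0 ≤ c) (α τ η : ℝ → ℝ)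
    (hα : ∀ s ∈ Set.Ioo lo hi, HasDerivAt α (τ s) s)
    (hτ : ∀ s ∈ Set.Ioo lo hi, HasDerivAt τ ((c + a * τ s) * α s - η s) s)
    (hη : ∀ s ∈ Set.Ioo lo hi, HasDerivAt η (-((c + a * τ s) * τ s)) s)
    (hnt : ¬ ∃ b : ℝ, ∀ s ∈ Set.Ioo lo hi, τ s = b) :
    (∀ s₀ ∈ Set.Ioo lo hi, τ s₀ = 0 → 0 < (c + a * τ s₀) * α s₀ - η s₀ →
      ∀ s ∈ Set.Ioo lo hi, s₀ < s → 0 < τ s) ∧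
    (∀ s₁ ∈ Set.Ioo lo hi, ∀ s₂ ∈ Set.Ioo lo hi, ∀ s₃ ∈ Set.Ioo lo hi,
      τ s₁ = 0 → τ s₂ = 0 → τ s₃ = 0 → s₁ = s₂ ∨ s₁ = s₃ ∨ s₂ = s₃) := by
  have h : IsSolutionOn a c α τ η (Ioo lo hi) := ⟨hα, hτ, hη⟩
  refine ⟨fun s₀ hs₀ h0 h1 s hs hlt => h.τ_pos_of_lt ha hc hs₀ h0 h1 hs hlt, ?_⟩
  intro s₁ h₁ s₂ h₂ s₃ h₃ z₁ z₂ z₃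
  refine eq_or_eq_or_eq_of_not_lt_lt (S := {s ∈ Ioo lo hi | τ s = 0}) ?_
    s₁ ⟨h₁, z₁⟩ s₂ ⟨h₂, z₂⟩ s₃ ⟨h₃, z₃⟩
  rintro p ⟨hp, hτp⟩ q ⟨hq, hτq⟩ r ⟨hr, hτr⟩ hpq hqr
  exact h.false_of_τ_eq_zero_of_lt_of_lt ha hc (fun h0 => hnt ⟨0, h0⟩) hp hq hr hpq hqr hτp hτq hτr
end

section
/- For a > 0 and c < 0, the vector field Φ(α, τ, η) = (τ, (c + aτ)α - η, -(c + aτ)τ) restricted to the surface H = {2αη + τ² = -1, α < 0} has exactly one singular point p = (-1/√(-2c), 0, -c/√(-2c)), and the eigenvalues of the linearization dΦ_p restricted to the tangent plane T_pH are λ = (-a ± √(a² - 16c²)) / (2√(-2c)); these are real iff 4|c| ≤ a. -/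
/-!
On `H` the zeros of `Φ` have `τ = 0` and `η = cα`, so the constraint becomes `-2cα² = 1`, which
with `α < 0` pins down `p`. In the tangent coordinates `(w₁, w₂)` the linearization is the
companion matrix of `λ² - a p₁ λ - 2c`, whose discriminant is `(a² - 16c²)/(-2c)`; its roots are
the stated eigenvalues, and they are real exactly when `a² ≥ 16c²`.
-/

def vectorField (a c : ℝ) (q : ℝ × ℝ × ℝ) : ℝ × ℝ × ℝ :=
  (q.2.1, (c + a * q.2.1) * q.1 - q.2.2, -((c + a * q.2.1) * q.2.1))

theorem eq_neg_one_div_sqrt_of_sq_mul_eq_one {x r : ℝ} (hx : x < 0) (h : x ^ 2 * r = 1) :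
    x = -1 / √r := by
  have hr : r = (x⁻¹) ^ 2 := by
    rw [inv_pow, eq_inv_of_mul_eq_one_right h]
  rw [hr, Real.sqrt_sq_eq_abs, abs_of_neg (inv_lt_zero.2 hx)]
  field_simp

theorem vectorField_eq_zero_iff {a c : ℝ} {q : ℝ × ℝ × ℝ}
    (hq : 2 * q.1 * q.2.2 + q.2.1 ^ 2 = -1) (hα : q.1 < 0) :
    vectorField a c q = 0 ↔ q = (-1 / √(-2 * c), 0, -c / √(-2 * c)) := by
  obtain ⟨α, τ, η⟩ := q
  simp only [vectorField, Prod.mk_eq_zero, Prod.mk.injEq] at hq hα ⊢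
  constructor
  · rintro ⟨rfl, hη, -⟩
    obtain rfl : η = c * α := by linarith
    obtain rfl : α = -1 / √(-2 * c) := eq_neg_one_div_sqrt_of_sq_mul_eq_one hα (by linarith)
    exact ⟨rfl, rfl, by ring⟩
  · rintro ⟨rfl, rfl, rfl⟩
    exact ⟨rfl, by ring, by ring⟩

theorem fderiv_vectorField_apply (a c : ℝ) (q w : ℝ × ℝ × ℝ) :
    fderiv ℝ (vectorField a c) q w =
      (w.2.1, (c + a * q.2.1) * w.1 + a * q.1 * w.2.1 - w.2.2,
        -((c + 2 * a * q.2.1) * w.2.1)) := by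
  have hα : HasFDerivAt (fun q : ℝ × ℝ × ℝ => q.1) (ContinuousLinearMap.fst ℝ ℝ (ℝ × ℝ)) q :=
    hasFDerivAt_fst
  have hτ : HasFDerivAt (fun q : ℝ × ℝ × ℝ => q.2.1)
      ((ContinuousLinearMap.fst ℝ ℝ ℝ).comp (ContinuousLinearMap.snd ℝ ℝ (ℝ × ℝ))) q :=
    hasFDerivAt_fst.comp q hasFDerivAt_snd
  have hη : HasFDerivAt (fun q : ℝ × ℝ × ℝ => q.2.2)
      ((ContinuousLinearMap.snd ℝ ℝ ℝ).comp (ContinuousLinearMap.snd ℝ ℝ (ℝ × ℝ))) q :=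
    hasFDerivAt_snd.comp q hasFDerivAt_snd
  have hcoef := (hτ.const_mul a).const_add c
  have hΦ : HasFDerivAt (vectorField a c) _ q :=
    hτ.prodMk (((hcoef.mul hα).sub hη).prodMk (hcoef.mul hτ).neg)
  rw [hΦ.fderiv]
  simp only [ContinuousLinearMap.prod_apply, ContinuousLinearMap.comp_apply, add_apply, sub_apply,
    neg_apply, smul_apply, ContinuousLinearMap.coe_fst', ContinuousLinearMap.coe_snd', smul_eq_mul,
    Prod.mk.injEq]
  exact ⟨trivial, by ring, by ring⟩

theorem exists_eigenvector_companion_iff {K : Type*} [Field K] (β γ l : K) :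
    (∃ w₁ w₂ : K, (w₁, w₂) ≠ (0, 0) ∧ w₂ = l * w₁ ∧ β * w₁ + γ * w₂ = l * w₂) ↔
      l * l - γ * l - β = 0 := by
  constructor
  · rintro ⟨w₁, w₂, hne, rfl, heq⟩
    have hw₁ : w₁ ≠ 0 := by rintro rfl; simp at hne
    have : (l * l - γ * l - β) * w₁ = 0 := by linear_combination -heq
    exact (mul_eq_zero.1 this).resolve_right hw₁
  · intro h
    exact ⟨1, l, by simp, (mul_one l).symm, by linear_combination -h⟩

open Complex in
theorem Complex.im_ofReal_cpow_half_eq_zero_iff {x : ℝ} :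
    ((x : ℂ) ^ ((1 : ℂ) / 2)).im = 0 ↔ 0 ≤ x := by
  constructor
  · intro him
    have hsq : ((x : ℂ) ^ ((1 : ℂ) / 2)) ^ 2 = x := by
      rw [one_div]; exact cpow_ofNat_inv_pow _ 2
    have := congrArg re hsq
    simp only [sq, mul_re, him, mul_zero, sub_zero, ofReal_re] at this
    rw [← this]; exact mul_self_nonneg _
  · intro hx
    rw [← ofReal_one, ← ofReal_ofNat, ← ofReal_div, ← ofReal_cpow hx, ofReal_im]

theorem linearization_charpoly_eq_zero_iff {a c : ℝ} (hc : c < 0) (l : ℂ) :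
    l * l - ((a * (-1 / √(-2 * c)) : ℝ) : ℂ) * l - ((2 * c : ℝ) : ℂ) = 0 ↔
      (l = ((-a : ℂ) + ((a ^ 2 - 16 * c ^ 2 : ℝ) : ℂ) ^ ((1 : ℂ) / 2)) / (2 * (√(-2 * c) : ℂ)) ∨
       l = ((-a : ℂ) - ((a ^ 2 - 16 * c ^ 2 : ℝ) : ℂ) ^ ((1 : ℂ) / 2)) / (2 * (√(-2 * c) : ℂ))) := by
  have hs : (√(-2 * c) : ℂ) ≠ 0 := Complex.ofReal_ne_zero.2 (Real.sqrt_pos.2 (by linarith)).ne'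
  have hs2 : (√(-2 * c) : ℂ) ^ 2 = -2 * c := by
    rw [← Complex.ofReal_pow, Real.sq_sqrt (by linarith)]; push_cast; ring
  have hd2 : (((a ^ 2 - 16 * c ^ 2 : ℝ) : ℂ) ^ ((1 : ℂ) / 2)) ^ 2 = a ^ 2 - 16 * c ^ 2 := by
    rw [one_div, Complex.cpow_ofNat_inv_pow]; push_cast; ring
  generalize ((a ^ 2 - 16 * c ^ 2 : ℝ) : ℂ) ^ ((1 : ℂ) / 2) = d at *
  push_cast
  generalize (√(-2 * c) : ℂ) = s at *
  have hdiscrim : discrim 1 (-(a * (-1 / s))) (-(2 * c)) = d / s * (d / s) := by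
    rw [discrim]; field_simp; linear_combination -hd2 + 8 * c * hs2
  rw [show l * l - a * (-1 / s) * l - 2 * c = 1 * (l * l) + -(a * (-1 / s)) * l + -(2 * c) by ring,
    quadratic_eq_zero_iff one_ne_zero hdiscrim]
  congr! 2 <;> field_simp

/-- For `a > 0`, `c < 0`, the vector field `Φ(α,τ,η) = (τ, (c+aτ)α-η, -(c+aτ)τ)` on
`H = {2αη + τ² = -1, α < 0}` has the unique singular point
`p = (-1/√(-2c), 0, -c/√(-2c))`; in the basis of the tangent plane
(`w = (w₁, w₂, -c w₁)`) the linearization acts as `(w₁,w₂) ↦ (w₂, 2c w₁ + a p₁ w₂)`,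
whose eigenvalues are `λ = (-a ± √(a² - 16c²))/(2√(-2c))`; they are real iff `4|c| ≤ a`. -/
theorem stmt_10 (a c : ℝ) (ha : 0 < a) (hc : c < 0)
    (Φ : ℝ × ℝ × ℝ → ℝ × ℝ × ℝ)
    (hΦ : Φ = fun q => (q.2.1, (c + a * q.2.1) * q.1 - q.2.2, -((c + a * q.2.1) * q.2.1)))
    (H : Set (ℝ × ℝ × ℝ))
    (hH : H = {q | 2 * q.1 * q.2.2 + q.2.1 ^ 2 = -1 ∧ q.1 < 0})
    (p : ℝ × ℝ × ℝ)
    (hp : p = (-1 / Real.sqrt (-2 * c), 0, -c / Real.sqrt (-2 * c))) :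
    (∀ q ∈ H, Φ q = 0 ↔ q = p) ∧
    (∀ w₁ w₂ : ℝ, (fderiv ℝ Φ p) (w₁, w₂, -c * w₁)
        = (w₂, 2 * c * w₁ + a * p.1 * w₂, -c * w₂)) ∧
    (∀ lam : ℂ,
      (∃ w₁ w₂ : ℂ, (w₁, w₂) ≠ (0, 0) ∧ w₂ = lam * w₁ ∧
          ((2 * c : ℝ) : ℂ) * w₁ + ((a * p.1 : ℝ) : ℂ) * w₂ = lam * w₂) ↔
        (lam = ((-a : ℂ) + ((a ^ 2 - 16 * c ^ 2 : ℝ) : ℂ) ^ ((1 : ℂ) / 2))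
              / (2 * (Real.sqrt (-2 * c) : ℂ)) ∨
         lam = ((-a : ℂ) - ((a ^ 2 - 16 * c ^ 2 : ℝ) : ℂ) ^ ((1 : ℂ) / 2))
              / (2 * (Real.sqrt (-2 * c) : ℂ)))) ∧
    ((((a ^ 2 - 16 * c ^ 2 : ℝ) : ℂ) ^ ((1 : ℂ) / 2)).im = 0 ↔ 4 * |c| ≤ a) := by
  obtain rfl : Φ = vectorField a c := hΦ
  subst hH hp
  refine ⟨fun q ⟨hq, hα⟩ => vectorField_eq_zero_iff hq hα, fun w₁ w₂ => ?_,
    fun l => (exists_eigenvector_companion_iff _ _ l).trans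
      (linearization_charpoly_eq_zero_iff hc l), ?_⟩
  · rw [fderiv_vectorField_apply]
    simp only [Prod.mk.injEq]
    exact ⟨trivial, by ring, by ring⟩
  · have h16 : 16 * c ^ 2 = (4 * c) ^ 2 := by ring
    rw [Complex.im_ofReal_cpow_half_eq_zero_iff, sub_nonneg, h16, sq_le_sq, abs_mul,
      abs_of_pos ha, abs_of_pos four_pos]
end

section
/- Let a > 0, c < 0 and let (α, τ, η) be a solution of α' = τ, τ' = (c + aτ)α - η, η' = -(c + aτ)τ with 2α(s)η(s) + τ(s)² = -1, α(s) < 0, η(s) > 0 for all s in its maximal interval. Then the function g = cα + η is positive and non-increasing, and for any s̄ in the domain one has the bounds 0 ≤ cα(s) ≤ g(s̄) and 0 ≤ η(s) ≤ g(s̄) for all s > s̄; in particular α, η, and τ are bounded on (s̄, ω₊). -/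
/-!
Along the flow, `g = cα + η` has derivative `cτ - (c + aτ)τ = -aτ² ≤ 0`, so it is non-increasing;
it is positive because `cα > 0` and `η > 0`. Both summands are therefore bounded by `g(s̄)`
after `s̄`, which bounds `α` and `η`, and the constraint gives `τ² = -1 - 2αη ≤ (η - α)²`.
-/

open Set

theorem antitoneOn_of_hasDerivAt_nonpos {D : Set ℝ} (hD : D.OrdConnected) {f f' : ℝ → ℝ}
    (hf : ∀ x ∈ D, HasDerivAt f (f' x) x) (hf'₀ : ∀ x ∈ D, f' x ≤ 0) : AntitoneOn f D :=
  antitoneOn_of_hasDerivWithinAt_nonpos hD.convex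
    (fun x hx ↦ (hf x hx).continuousAt.continuousWithinAt)
    (fun x hx ↦ (hf x (interior_subset hx)).hasDerivWithinAt)
    (fun x hx ↦ hf'₀ x (interior_subset hx))

theorem hasDerivAt_mul_add_of_flow {a c v s : ℝ} {α η : ℝ → ℝ}
    (hα : HasDerivAt α v s) (hη : HasDerivAt η (-((c + a * v) * v)) s) :
    HasDerivAt (fun t ↦ c * α t + η t) (-(a * v ^ 2)) s :=
  ((hα.const_mul c).add hη).congr_deriv (by ring)

theorem abs_le_neg_add_of_two_mul_mul_add_sq_eq_neg_one {x y z : ℝ}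
    (h : 2 * x * y + z ^ 2 = -1) (hx : x ≤ 0) (hy : 0 ≤ y) : |z| ≤ -x + y :=
  abs_le_of_sq_le_sq (by nlinarith [sq_nonneg x, sq_nonneg y]) (by linarith)

theorem abs_le_of_two_mul_mul_add_sq_eq_neg_one {c G x y z : ℝ} (hc : c < 0)
    (h : 2 * x * y + z ^ 2 = -1) (hx : x < 0) (hy : 0 < y) (hcx : c * x ≤ G) (hyG : y ≤ G) :
    |x| ≤ G / -c + G ∧ |z| ≤ G / -c + G ∧ |y| ≤ G / -c + G := by
  have hxG : -x ≤ G / -c := by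
    rw [le_div_iff₀ (neg_pos.2 hc)]
    linarith
  have hG : 0 ≤ G / -c := (neg_pos.2 hx).le.trans hxG
  have hz := abs_le_neg_add_of_two_mul_mul_add_sq_eq_neg_one h hx.le hy.le
  refine ⟨?_, by linarith, ?_⟩
  · rw [abs_of_neg hx]
    linarith
  · rw [abs_of_pos hy]
    linarith

theorem stmt_13_general (a c : ℝ) (ha : 0 < a) (hc : c < 0) (wlo whi : EReal) (α τ η : ℝ → ℝ)
    (hα : ∀ s : ℝ, wlo < (s : EReal) → (s : EReal) < whi → HasDerivAt α (τ s) s)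
    (hη : ∀ s : ℝ, wlo < (s : EReal) → (s : EReal) < whi →
      HasDerivAt η (-((c + a * τ s) * τ s)) s)
    (hH : ∀ s : ℝ, wlo < (s : EReal) → (s : EReal) < whi →
      2 * α s * η s + (τ s) ^ 2 = -1 ∧ α s < 0 ∧ 0 < η s) :
    (∀ s : ℝ, wlo < (s : EReal) → (s : EReal) < whi → 0 < c * α s + η s) ∧
    (∀ s t : ℝ, wlo < (s : EReal) → (s : EReal) < whi → wlo < (t : EReal) → (t : EReal) < whi →
      s ≤ t → c * α t + η t ≤ c * α s + η s) ∧
    (∀ sb : ℝ, wlo < (sb : EReal) → (sb : EReal) < whi →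
      ∀ s : ℝ, (s : EReal) < whi → sb < s →
        0 ≤ c * α s ∧ c * α s ≤ c * α sb + η sb ∧ 0 ≤ η s ∧ η s ≤ c * α sb + η sb) ∧
    (∀ sb : ℝ, wlo < (sb : EReal) → (sb : EReal) < whi →
      ∃ M : ℝ, ∀ s : ℝ, (s : EReal) < whi → sb < s →
        |α s| ≤ M ∧ |τ s| ≤ M ∧ |η s| ≤ M) := by
  have hanti : AntitoneOn (fun s ↦ c * α s + η s) ((↑) ⁻¹' Ioo wlo whi) :=
    antitoneOn_of_hasDerivAt_nonpos (ordConnected_Ioo.preimage_mono EReal.coe_strictMono.monotone)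
      (fun s hs ↦ hasDerivAt_mul_add_of_flow (hα s hs.1 hs.2) (hη s hs.1 hs.2))
      (fun s _ ↦ neg_nonpos.2 (mul_nonneg ha.le (sq_nonneg _)))
  have hcα : ∀ s : ℝ, wlo < (s : EReal) → (s : EReal) < whi → 0 < c * α s :=
    fun s h₁ h₂ ↦ mul_pos_of_neg_of_neg hc (hH s h₁ h₂).2.1
  have hbound : ∀ sb : ℝ, wlo < (sb : EReal) → (sb : EReal) < whi →
      ∀ s : ℝ, (s : EReal) < whi → sb < s →
        0 ≤ c * α s ∧ c * α s ≤ c * α sb + η sb ∧ 0 ≤ η s ∧ η s ≤ c * α sb + η sb := by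
    intro sb hsb₁ hsb₂ s hs₂ hsbs
    have hs₁ : wlo < (s : EReal) := hsb₁.trans (EReal.coe_lt_coe_iff.2 hsbs)
    have hg : c * α s + η s ≤ c * α sb + η sb := hanti ⟨hsb₁, hsb₂⟩ ⟨hs₁, hs₂⟩ hsbs.le
    have hη₀ := (hH s hs₁ hs₂).2.2
    have hcα₀ := hcα s hs₁ hs₂
    exact ⟨hcα₀.le, by linarith, hη₀.le, by linarith⟩
  refine ⟨fun s h₁ h₂ ↦ add_pos (hcα s h₁ h₂) (hH s h₁ h₂).2.2,
    fun s t hs₁ hs₂ ht₁ ht₂ hst ↦ hanti ⟨hs₁, hs₂⟩ ⟨ht₁, ht₂⟩ hst, hbound, ?_⟩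
  intro sb hsb₁ hsb₂
  refine ⟨(c * α sb + η sb) / -c + (c * α sb + η sb), fun s hs₂ hsbs ↦ ?_⟩
  obtain ⟨hH₀, hα₀, hη₀⟩ := hH s (hsb₁.trans (EReal.coe_lt_coe_iff.2 hsbs)) hs₂
  obtain ⟨-, hcαG, -, hηG⟩ := hbound sb hsb₁ hsb₂ s hs₂ hsbs
  exact abs_le_of_two_mul_mul_add_sq_eq_neg_one hc hH₀ hα₀ hη₀ hcαG hηG

/-- For `a > 0`, `c < 0` and a solution staying in `H` (`2αη + τ² = -1`, `α < 0`, `η > 0`),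
the function `g = cα + η` is positive and non-increasing; for any `s̄` in the domain,
`0 ≤ cα(s) ≤ g(s̄)` and `0 ≤ η(s) ≤ g(s̄)` for `s > s̄`, and `α`, `τ`, `η` are bounded
on `(s̄, ω₊)`. -/
theorem stmt_13 (a c : ℝ) (ha : 0 < a) (hc : c < 0) (wlo whi : EReal) (α τ η : ℝ → ℝ)
    (hα : ∀ s : ℝ, wlo < (s : EReal) → (s : EReal) < whi → HasDerivAt α (τ s) s)
    (hτ : ∀ s : ℝ, wlo < (s : EReal) → (s : EReal) < whi →
      HasDerivAt τ ((c + a * τ s) * α s - η s) s)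
    (hη : ∀ s : ℝ, wlo < (s : EReal) → (s : EReal) < whi →
      HasDerivAt η (-((c + a * τ s) * τ s)) s)
    (hH : ∀ s : ℝ, wlo < (s : EReal) → (s : EReal) < whi →
      2 * α s * η s + (τ s) ^ 2 = -1 ∧ α s < 0 ∧ 0 < η s) :
    (∀ s : ℝ, wlo < (s : EReal) → (s : EReal) < whi → 0 < c * α s + η s) ∧
    (∀ s t : ℝ, wlo < (s : EReal) → (s : EReal) < whi → wlo < (t : EReal) → (t : EReal) < whi →
      s ≤ t → c * α t + η t ≤ c * α s + η s) ∧
    (∀ sb : ℝ, wlo < (sb : EReal) → (sb : EReal) < whi →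
      ∀ s : ℝ, (s : EReal) < whi → sb < s →
        0 ≤ c * α s ∧ c * α s ≤ c * α sb + η sb ∧ 0 ≤ η s ∧ η s ≤ c * α sb + η sb) ∧
    (∀ sb : ℝ, wlo < (sb : EReal) → (sb : EReal) < whi →
      ∃ M : ℝ, ∀ s : ℝ, (s : EReal) < whi → sb < s →
        |α s| ≤ M ∧ |τ s| ≤ M ∧ |η s| ≤ M) :=
  stmt_13_general a c ha hc wlo whi α τ η hα hη hH
end

section
/- With X, T, Y, k a lightcone frame (T = X', T' = kX - Y, Y' = -kT, ⟨X,X⟩=⟨Y,Y⟩=0, ⟨T,T⟩=⟨X,Y⟩=1, ⟨X,T⟩=⟨T,Y⟩=0) and k(s) ≠ 0 for all s, the curve -Y has squared speed ⟨Y',Y'⟩ = k², so -Y is spacelike, and its arc-length curvature equals 1/k. Consequently X solves the self-similar CF equation c + ⟨T, v⟩ = k if and only if -Y solves the self-similar ICF equation c + ⟨T̃, ṽ⟩ = 1/k̃ for appropriate tangent T̃ and curvature k̃ of -Y. -/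
noncomputable section

/-- Minkowski inner product on ℝ³. -/
def mink (u v : ℝ × ℝ × ℝ) : ℝ := -(u.1 * v.1) + u.2.1 * v.2.1 + u.2.2 * v.2.2

/-!
The first two claims are pointwise algebra in the lightcone frame: `⟨kT, kT⟩ = k²`, and in the
curvature formula `⟨γ', γ''⟩ = k k'`, `⟨γ'', γ''⟩ = k'² - 2k³`, so it equals
`(k²k'² - k²(k'² - 2k³)) / (2k⁶) = 1/k`. For the equivalence, `k` is continuous and nonvanishing
on an interval, hence of constant sign `ε = ±1`; then `T̃ = |k|⁻¹ k T = ε T`, `1/k̃ = k`, and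
`v ↦ ε v` matches solutions of the two equations.
-/

section Minkowski

variable (a : ℝ) (u v w : ℝ × ℝ × ℝ)

lemma mink_comm : mink u v = mink v u := by
  unfold mink; ring

lemma mink_smul_left : mink (a • u) v = a * mink u v := by
  simp only [mink, Prod.smul_fst, Prod.smul_snd, smul_eq_mul]; ring

lemma mink_smul_right : mink u (a • v) = a * mink u v := by
  rw [mink_comm, mink_smul_left, mink_comm]

lemma mink_add_left : mink (u + v) w = mink u w + mink v w := by
  simp only [mink, Prod.fst_add, Prod.snd_add]; ring

lemma mink_add_right : mink u (v + w) = mink u v + mink u w := by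
  rw [mink_comm, mink_add_left, mink_comm v, mink_comm w]

lemma mink_sub_left : mink (u - v) w = mink u w - mink v w := by
  simp only [mink, Prod.fst_sub, Prod.snd_sub]; ring

lemma mink_sub_right : mink u (v - w) = mink u v - mink u w := by
  rw [mink_comm, mink_sub_left, mink_comm v, mink_comm w]

end Minkowski

structure IsLightconeFrame (X T Y : ℝ × ℝ × ℝ) : Prop where
  mink_X_X : mink X X = 0
  mink_Y_Y : mink Y Y = 0
  mink_T_T : mink T T = 1
  mink_X_Y : mink X Y = 1
  mink_X_T : mink X T = 0
  mink_T_Y : mink T Y = 0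

/-- The curvature of a spacelike curve read off its velocity `γ'` and acceleration `γ''` in an
arbitrary parametrization, as in the paper's cone curvature formula. -/
def coneCurvature (γ' γ'' : ℝ × ℝ × ℝ) : ℝ :=
  (mink γ' γ'' ^ 2 - mink γ' γ' * mink γ'' γ'') / (2 * mink γ' γ' ^ 3)

namespace IsLightconeFrame

variable {X T Y : ℝ × ℝ × ℝ}

lemma mink_smul_T_self (h : IsLightconeFrame X T Y) (k : ℝ) :
    mink (k • T) (k • T) = k ^ 2 := by
  rw [mink_smul_left, mink_smul_right, h.mink_T_T]; ring

lemma coneCurvature_eq_inv (h : IsLightconeFrame X T Y) {k : ℝ} (hk : k ≠ 0) (k' : ℝ) :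
    coneCurvature (k • T) (k' • T + k • (k • X - Y)) = 1 / k := by
  have hvel : mink (k • T) (k' • T + k • (k • X - Y)) = k * k' := by
    simp only [mink_add_right, mink_sub_right, mink_smul_left, mink_smul_right, h.mink_T_T,
      mink_comm T X, h.mink_X_T, h.mink_T_Y]
    ring
  have hacc : mink (k' • T + k • (k • X - Y)) (k' • T + k • (k • X - Y)) = k' ^ 2 - 2 * k ^ 3 := by
    simp only [mink_add_left, mink_add_right, mink_sub_left, mink_sub_right, mink_smul_left,
      mink_smul_right, h.mink_T_T, h.mink_X_X, h.mink_Y_Y, h.mink_X_Y, h.mink_X_T, h.mink_T_Y,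
      mink_comm Y X, mink_comm Y T, mink_comm T X]
    ring
  rw [coneCurvature, hvel, hacc, h.mink_smul_T_self]
  field_simp
  ring

end IsLightconeFrame

lemma IsPreconnected.exists_abs_inv_mul_eq_sign {S : Set ℝ} (hS : IsPreconnected S)
    {k : ℝ → ℝ} (hk : ContinuousOn k S) (hk0 : ∀ s ∈ S, k s ≠ 0) :
    ∃ ε : ℝ, ε * ε = 1 ∧ ∀ s ∈ S, |k s|⁻¹ * k s = ε := by
  have habs : ∀ s ∈ S, |k s| ≠ 0 := fun s hs => abs_ne_zero.mpr (hk0 s hs)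
  rcases hS.eq_or_eq_neg_of_sq_eq hk hk.abs (fun s _ => by simp) (habs _ ·) with hpos | hneg
  · exact ⟨1, one_mul 1, fun s hs => (inv_mul_eq_one₀ (habs s hs)).mpr (hpos hs).symm⟩
  · refine ⟨-1, by norm_num, fun s hs => ?_⟩
    rw [inv_mul_eq_iff_eq_mul₀ (habs s hs), mul_neg_one]
    exact hneg hs

lemma exists_selfSimilar_iff_of_sign {S : Set ℝ} {T : ℝ → ℝ × ℝ × ℝ} {k : ℝ → ℝ} {ε : ℝ}
    (hε : ε * ε = 1) (hsign : ∀ s ∈ S, |k s|⁻¹ * k s = ε) (c : ℝ) :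
    (∃ v, ∀ s ∈ S, c + mink (T s) v = k s) ↔
      ∃ vt, ∀ s ∈ S, c + mink (|k s|⁻¹ • (k s • T s)) vt = 1 / (k s)⁻¹ := by
  have hT : ∀ s ∈ S, ∀ w, mink (|k s|⁻¹ • (k s • T s)) w = mink (T s) (ε • w) := by
    intro s hs w
    rw [smul_smul, hsign s hs, mink_smul_left, mink_smul_right]
  simp only [one_div, inv_inv]
  constructor
  · rintro ⟨v, hv⟩
    refine ⟨ε • v, fun s hs => ?_⟩
    rw [hT s hs, smul_smul, hε, one_smul, hv s hs]
  · rintro ⟨vt, hvt⟩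
    exact ⟨ε • vt, fun s hs => hT s hs vt ▸ hvt s hs⟩

theorem stmt_16_general (lo hi c : ℝ) (X T Y : ℝ → ℝ × ℝ × ℝ) (k k' : ℝ → ℝ)
    (hk : ∀ s ∈ Set.Ioo lo hi, HasDerivAt k (k' s) s)
    (hXX : ∀ s ∈ Set.Ioo lo hi, mink (X s) (X s) = 0)
    (hYY : ∀ s ∈ Set.Ioo lo hi, mink (Y s) (Y s) = 0)
    (hTT : ∀ s ∈ Set.Ioo lo hi, mink (T s) (T s) = 1)
    (hXY : ∀ s ∈ Set.Ioo lo hi, mink (X s) (Y s) = 1)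
    (hXT : ∀ s ∈ Set.Ioo lo hi, mink (X s) (T s) = 0)
    (hTY : ∀ s ∈ Set.Ioo lo hi, mink (T s) (Y s) = 0)
    (hknz : ∀ s ∈ Set.Ioo lo hi, k s ≠ 0) :
    (∀ s ∈ Set.Ioo lo hi,
      mink ((k s) • T s) ((k s) • T s) = (k s) ^ 2 ∧ 0 < (k s) ^ 2) ∧
    (∀ s ∈ Set.Ioo lo hi,
      ((mink ((k s) • T s) (k' s • T s + k s • (k s • X s - Y s))) ^ 2
          - mink ((k s) • T s) ((k s) • T s)
            * mink (k' s • T s + k s • (k s • X s - Y s))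
                (k' s • T s + k s • (k s • X s - Y s)))
        / (2 * (mink ((k s) • T s) ((k s) • T s)) ^ 3) = 1 / k s) ∧
    ((∃ v : ℝ × ℝ × ℝ, ∀ s ∈ Set.Ioo lo hi, c + mink (T s) v = k s) ↔
      (∃ vt : ℝ × ℝ × ℝ, ∀ s ∈ Set.Ioo lo hi,
        c + mink ((|k s|)⁻¹ • ((k s) • T s)) vt = 1 / (k s)⁻¹)) := by
  have frame : ∀ s ∈ Set.Ioo lo hi, IsLightconeFrame (X s) (T s) (Y s) := fun s hs =>
    ⟨hXX s hs, hYY s hs, hTT s hs, hXY s hs, hXT s hs, hTY s hs⟩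
  have hcont : ContinuousOn k (Set.Ioo lo hi) := fun s hs =>
    (hk s hs).continuousAt.continuousWithinAt
  obtain ⟨ε, hε, hsign⟩ := isPreconnected_Ioo.exists_abs_inv_mul_eq_sign hcont hknz
  refine ⟨fun s hs => ⟨(frame s hs).mink_smul_T_self (k s), by positivity [hknz s hs]⟩,
    fun s hs => (frame s hs).coneCurvature_eq_inv (hknz s hs) (k' s),
    exists_selfSimilar_iff_of_sign hε hsign c⟩

/-- With a lightcone frame and `k ≠ 0`: the associated curve `-Y` has
`⟨(-Y)', (-Y)'⟩ = k² > 0` (spacelike), its curvature computed by the cone curvature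
formula equals `1/k`, and `X` is a self-similar CF solution (`∃ v, c + ⟨T,v⟩ = k`)
iff `-Y` is a self-similar ICF solution (`∃ ṽ, c + ⟨T̃,ṽ⟩ = 1/k̃` with `T̃` the unit
tangent of `-Y` and `k̃ = 1/k`). -/
theorem stmt_16 (lo hi c : ℝ) (X T Y : ℝ → ℝ × ℝ × ℝ) (k k' : ℝ → ℝ)
    (hX : ∀ s ∈ Set.Ioo lo hi, HasDerivAt X (T s) s)
    (hT : ∀ s ∈ Set.Ioo lo hi, HasDerivAt T (k s • X s - Y s) s)
    (hY : ∀ s ∈ Set.Ioo lo hi, HasDerivAt Y (-(k s) • T s) s)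
    (hk : ∀ s ∈ Set.Ioo lo hi, HasDerivAt k (k' s) s)
    (hXX : ∀ s ∈ Set.Ioo lo hi, mink (X s) (X s) = 0)
    (hYY : ∀ s ∈ Set.Ioo lo hi, mink (Y s) (Y s) = 0)
    (hTT : ∀ s ∈ Set.Ioo lo hi, mink (T s) (T s) = 1)
    (hXY : ∀ s ∈ Set.Ioo lo hi, mink (X s) (Y s) = 1)
    (hXT : ∀ s ∈ Set.Ioo lo hi, mink (X s) (T s) = 0)
    (hTY : ∀ s ∈ Set.Ioo lo hi, mink (T s) (Y s) = 0)
    (hknz : ∀ s ∈ Set.Ioo lo hi, k s ≠ 0) :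
    (∀ s ∈ Set.Ioo lo hi,
      mink ((k s) • T s) ((k s) • T s) = (k s) ^ 2 ∧ 0 < (k s) ^ 2) ∧
    (∀ s ∈ Set.Ioo lo hi,
      ((mink ((k s) • T s) (k' s • T s + k s • (k s • X s - Y s))) ^ 2
          - mink ((k s) • T s) ((k s) • T s)
            * mink (k' s • T s + k s • (k s • X s - Y s))
                (k' s • T s + k s • (k s • X s - Y s)))
        / (2 * (mink ((k s) • T s) ((k s) • T s)) ^ 3) = 1 / k s) ∧
    ((∃ v : ℝ × ℝ × ℝ, ∀ s ∈ Set.Ioo lo hi, c + mink (T s) v = k s) ↔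
      (∃ vt : ℝ × ℝ × ℝ, ∀ s ∈ Set.Ioo lo hi,
        c + mink ((|k s|)⁻¹ • ((k s) • T s)) vt = 1 / (k s)⁻¹)) :=
  stmt_16_general lo hi c X T Y k k' hk hXX hYY hTT hXY hXT hTY hknz
end
end

section
/- Let a > 0, c = 0 and consider the ICF-soliton system α̃' = τ̃, τ̃' = α̃/(aτ̃) - η̃ rescaled: along such solutions η̃(s) = -s/a + η̃₀ (since η̃' = -1/a when c = 0 in the ICF system η̃' = -τ̃/(aτ̃)), and with the constraint 2rα̃ + τ̃² = 0 (r = η̃ > 0), the function τ̃ as a function of r satisfies the linear ODE τ̃'(r) - τ̃(r)/(2r) = ar, whose solution with τ̃(η̃₀) = τ̃₀ is τ̃(r) = (2a r²)/3 + √r · (3τ̃₀ - 2aη̃₀²)/(3√(η̃₀)). -/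
/-!
The constraint `2α̃η̃ + τ̃² = 0` eliminates `α̃`: the equation for `τ̃` becomes
`τ̃' = -τ̃/(2aη̃) - η̃`, which together with `η̃' = -1/a` is linear in `τ̃` along `r = η̃`.
Its integrating factor is `r^{-1/2}`, and `2ar²/3` is a particular solution, so
`(τ̃ - 2aη̃²/3)/√η̃` has zero derivative in `s` and is therefore constant on the interval.
-/

open Set

theorem IsOpen.eq_of_hasDerivAt_eq_zero {𝕜 G : Type*} [RCLike 𝕜] [NormedAddCommGroup G]
    [NormedSpace 𝕜 G] {f : 𝕜 → G} {s : Set 𝕜} (hs : IsOpen s) (hs' : IsPreconnected s)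
    (hf : ∀ x ∈ s, HasDerivAt f 0 x) {x y : 𝕜} (hx : x ∈ s) (hy : y ∈ s) : f x = f y :=
  hs.is_const_of_deriv_eq_zero hs' (fun z hz => (hf z hz).differentiableAt.differentiableWithinAt)
    (fun z hz => (hf z hz).deriv) hx hy

theorem IsOpen.eq_add_mul_sub_of_hasDerivAt_const {f : ℝ → ℝ} {c : ℝ} {s : Set ℝ}
    (hs : IsOpen s) (hs' : IsPreconnected s) (hf : ∀ x ∈ s, HasDerivAt f c x) {x y : ℝ}
    (hx : x ∈ s) (hy : y ∈ s) : f y = f x + c * (y - x) := by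
  have hconst : ∀ z ∈ s, HasDerivAt (fun t => f t - c * t) 0 z := fun z hz => by
    simpa using (hf z hz).fun_sub ((hasDerivAt_id z).const_mul c)
  have := hs.eq_of_hasDerivAt_eq_zero hs' hconst hx hy
  linarith

/-- No `τ ≠ 0` is needed: for `τ = 0` both sides are `0` (as `x / 0 = 0`). -/
theorem div_mul_eq_of_two_mul_mul_add_sq_eq_zero {α τ η : ℝ} (a : ℝ) (hη : η ≠ 0)
    (h : 2 * α * η + τ ^ 2 = 0) : α / (a * τ) = -τ / (2 * a * η) := by
  have hα : α = -τ ^ 2 / (2 * η) := by field_simp; linarith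
  rcases eq_or_ne τ 0 with rfl | hτ
  · simp
  · rw [hα]; field_simp

theorem HasDerivAt.comp_const_mul_const_sub {𝕜 : Type*} [NontriviallyNormedField 𝕜]
    {f : 𝕜 → 𝕜} {f' a b r : 𝕜} (hf : HasDerivAt f f' (a * (b - r))) :
    HasDerivAt (fun r => f (a * (b - r))) (f' * -a) r := by
  have hinner : HasDerivAt (fun r => a * (b - r)) (-a) r := by
    simpa using ((hasDerivAt_id r).const_sub b).const_mul a
  exact hf.comp r hinner

theorem hasDerivAt_div_sqrt_eq_zero {τ η : ℝ → ℝ} {a x : ℝ} (ha : a ≠ 0) (hη : 0 < η x)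
    (hτ : HasDerivAt τ (-τ x / (2 * a * η x) - η x) x) (hη' : HasDerivAt η (-(1 / a)) x) :
    HasDerivAt (fun s => (τ s - 2 * a * η s ^ 2 / 3) / √(η s)) 0 x := by
  have hnum := hτ.fun_sub (((hη'.fun_pow 2).const_mul (2 * a)).div_const 3)
  refine (hnum.fun_div (hη'.sqrt hη.ne') (Real.sqrt_pos.mpr hη).ne').congr_deriv ?_
  have hw : √(η x) ≠ 0 := (Real.sqrt_pos.mpr hη).ne'
  field_simp
  rw [Real.sq_sqrt hη.le]
  ring

theorem stmt_17_general (a lo hi : ℝ) (ha : 0 < a) (al ta et : ℝ → ℝ)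
    (h0 : (0 : ℝ) ∈ Set.Ioo lo hi)
    (hta : ∀ s ∈ Set.Ioo lo hi, HasDerivAt ta (al s / (a * ta s) - et s) s)
    (het : ∀ s ∈ Set.Ioo lo hi, HasDerivAt et (-(1 / a)) s)
    (hetpos : ∀ s ∈ Set.Ioo lo hi, 0 < et s)
    (hcon : ∀ s ∈ Set.Ioo lo hi, 2 * al s * et s + (ta s) ^ 2 = 0) :
    (∀ s ∈ Set.Ioo lo hi, et s = -s / a + et 0) ∧
    (∀ s ∈ Set.Ioo lo hi,
      HasDerivAt (fun r : ℝ => ta (a * (et 0 - r)))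
        (ta s / (2 * et s) + a * et s) (et s)) ∧
    (∀ s ∈ Set.Ioo lo hi,
      ta s = 2 * a * (et s) ^ 2 / 3
        + Real.sqrt (et s) * ((3 * ta 0 - 2 * a * (et 0) ^ 2) / (3 * Real.sqrt (et 0)))) := by
  have ha' := ha.ne'
  have hta' : ∀ s ∈ Ioo lo hi, HasDerivAt ta (-ta s / (2 * a * et s) - et s) s := fun s hs => by
    simpa only [div_mul_eq_of_two_mul_mul_add_sq_eq_zero a (hetpos s hs).ne' (hcon s hs)]
      using hta s hs
  have het_eq : ∀ s ∈ Ioo lo hi, et s = -s / a + et 0 := fun s hs => by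
    rw [isOpen_Ioo.eq_add_mul_sub_of_hasDerivAt_const isPreconnected_Ioo het h0 hs]
    ring
  refine ⟨het_eq, fun s hs => ?_, fun s hs => ?_⟩
  · have hs_eq : a * (et 0 - et s) = s := by rw [het_eq s hs]; field_simp; ring
    have houter : HasDerivAt ta (-ta s / (2 * a * et s) - et s) (a * (et 0 - et s)) := by
      rw [hs_eq]; exact hta' s hs
    refine houter.comp_const_mul_const_sub.congr_deriv ?_
    field_simp [(hetpos s hs).ne']
    ring
  · have h := isOpen_Ioo.eq_of_hasDerivAt_eq_zero isPreconnected_Ioo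
      (fun x hx => hasDerivAt_div_sqrt_eq_zero ha' (hetpos x hx) (hta' x hx) (het x hx)) hs h0
    have hsq := (Real.sqrt_pos.mpr (hetpos s hs)).ne'
    have hsq0 := (Real.sqrt_pos.mpr (hetpos 0 h0)).ne'
    field_simp at h ⊢
    linear_combination h

/-- ICF soliton system with `c = 0`:  `α̃' = τ̃`, `τ̃' = α̃/(aτ̃) - η̃`, `η̃' = -1/a`,
with constraint `2α̃η̃ + τ̃² = 0`, `η̃ > 0`.  Then `η̃(s) = -s/a + η̃(0)`;
as a function of `r = η̃`, `τ̃` satisfies `dτ̃/dr = τ̃/(2r) + ar`, and explicitly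
`τ̃ = 2ar²/3 + √r (3τ̃₀ - 2aη̃₀²)/(3√η̃₀)`. -/
theorem stmt_17 (a lo hi : ℝ) (ha : 0 < a) (al ta et : ℝ → ℝ)
    (h0 : (0 : ℝ) ∈ Set.Ioo lo hi)
    (hal : ∀ s ∈ Set.Ioo lo hi, HasDerivAt al (ta s) s)
    (hta : ∀ s ∈ Set.Ioo lo hi, HasDerivAt ta (al s / (a * ta s) - et s) s)
    (het : ∀ s ∈ Set.Ioo lo hi, HasDerivAt et (-(1 / a)) s)
    (htanz : ∀ s ∈ Set.Ioo lo hi, ta s ≠ 0)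
    (hetpos : ∀ s ∈ Set.Ioo lo hi, 0 < et s)
    (hcon : ∀ s ∈ Set.Ioo lo hi, 2 * al s * et s + (ta s) ^ 2 = 0) :
    (∀ s ∈ Set.Ioo lo hi, et s = -s / a + et 0) ∧
    (∀ s ∈ Set.Ioo lo hi,
      HasDerivAt (fun r : ℝ => ta (a * (et 0 - r)))
        (ta s / (2 * et s) + a * et s) (et s)) ∧
    (∀ s ∈ Set.Ioo lo hi,
      ta s = 2 * a * (et s) ^ 2 / 3
        + Real.sqrt (et s) * ((3 * ta 0 - 2 * a * (et 0) ^ 2) / (3 * Real.sqrt (et 0)))) :=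
  stmt_17_general a lo hi ha al ta et h0 hta het hetpos hcon
end

section
/- Let (α, τ, η) solve α' = τ, τ' = (c + aτ)α - η, η' = -(c + aτ)τ with a > 0, c < 0, and initial condition in H = {2αη + τ² = -1, α < 0}, on its maximal interval (ω₋, ω₊). Then ω₊ = +∞, and lim_{s→+∞} τ(s) = 0, lim_{s→+∞} 2cα(s)² = -1, lim_{s→+∞} 2η(s)² = -c; i.e., the solution converges to the singular point p = (-1/√(-2c), 0, -c/√(-2c)). -/
/-
Along solutions `g = cα + η` satisfies `g' = -aτ² ≤ 0`, and on `H` (where `cα > 0`,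
`η > 0`) an upper bound on `g` bounds `|α|`, `|τ|` and `η`. So the solution stays in a compact set
forward in time; a bounded solution of a `C¹` autonomous system has a limit at a finite endpoint and
can be continued past it, hence `ω₊ = +∞`. As `g` converges and `τ²`, `τ'` have bounded
derivatives, Barbalat's lemma gives `τ → 0` (from `g`) and then `τ' → 0` (from `τ`). On `H`,
`2cα² = -1 - 2aτα² + 2ατ' - τ²` and `2η² = -c - aτ - (c + aτ)τ² - 2ητ'`, which gives the limits.
-/

open Set Filter Topology Metric Function

theorem HasDerivAt.fst {E F : Type*} [NormedAddCommGroup E] [NormedSpace ℝ E]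
    [NormedAddCommGroup F] [NormedSpace ℝ F] {y : ℝ → E × F} {y' : E × F} {t : ℝ}
    (h : HasDerivAt y y' t) : HasDerivAt (fun s => (y s).1) y'.1 t :=
  (hasFDerivAt_fst (p := y t)).comp_hasDerivAt t h

theorem HasDerivAt.snd {E F : Type*} [NormedAddCommGroup E] [NormedSpace ℝ E]
    [NormedAddCommGroup F] [NormedSpace ℝ F] {y : ℝ → E × F} {y' : E × F} {t : ℝ}
    (h : HasDerivAt y y' t) : HasDerivAt (fun s => (y s).2) y'.2 t :=
  (hasFDerivAt_snd (p := y t)).comp_hasDerivAt t h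

theorem exists_forall_norm_comp_le {ι E F : Type*} [NormedAddCommGroup E] [ProperSpace E]
    [SeminormedAddCommGroup F] {φ : E → F} (hφ : Continuous φ) {x : ι → E} {S : Set ι} {R : ℝ}
    (hR : ∀ t ∈ S, ‖x t‖ ≤ R) : ∃ C, ∀ t ∈ S, ‖φ (x t)‖ ≤ C :=
  let ⟨C, hC⟩ := (isCompact_closedBall (0 : E) R).exists_bound_of_continuousOn hφ.continuousOn
  ⟨C, fun t ht => hC _ (mem_closedBall_zero_iff.2 (hR t ht))⟩

theorem Convex.uniformContinuousOn_of_norm_deriv_le {E : Type*} [NormedAddCommGroup E]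
    [NormedSpace ℝ E] {f f' : ℝ → E} {s : Set ℝ} {C : ℝ}
    (hs : Convex ℝ s) (hf : ∀ t ∈ s, HasDerivAt f (f' t) t) (hC : ∀ t ∈ s, ‖f' t‖ ≤ C) :
    UniformContinuousOn f s :=
  (hs.lipschitzOnWith_of_nnnorm_hasDerivWithin_le (C := C.toNNReal)
    (fun t ht => (hf t ht).hasDerivWithinAt) fun t ht => by
      rw [← NNReal.coe_le_coe, coe_nnnorm]
      exact (hC t ht).trans (Real.le_coe_toNNReal C)).uniformContinuousOn

theorem Convex.uniformContinuousOn_of_deriv_eq_comp {E F : Type*} [NormedAddCommGroup E]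
    [ProperSpace E] [NormedAddCommGroup F] [NormedSpace ℝ F] {f : ℝ → F} {ψ : E → F}
    {x : ℝ → E} {S : Set ℝ} {R : ℝ} (hS : Convex ℝ S) (hψ : Continuous ψ)
    (hR : ∀ t ∈ S, ‖x t‖ ≤ R) (hf : ∀ t ∈ S, HasDerivAt f (ψ (x t)) t) :
    UniformContinuousOn f S :=
  let ⟨_, hC⟩ := exists_forall_norm_comp_le hψ hR
  hS.uniformContinuousOn_of_norm_deriv_le hf hC

theorem UniformContinuousOn.exists_tendsto_nhdsWithin {X Y : Type*} [UniformSpace X]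
    [UniformSpace Y] [CompleteSpace Y] {f : X → Y} {s : Set X} {b : X}
    (hf : UniformContinuousOn f s) (hb : b ∈ closure s) : ∃ p, Tendsto f (𝓝[s] b) (𝓝 p) := by
  have : NeBot (𝓝[s] b) := mem_closure_iff_nhdsWithin_neBot.1 hb
  refine cauchy_map_iff_exists_tendsto.1 ⟨inferInstance, ?_⟩
  rw [prod_map_map_eq]
  refine hf.mono_left (le_inf ?_ ?_)
  · exact (cauchy_nhds.mono nhdsWithin_le_nhds).2
  · rw [← prod_principal_principal]
    exact prod_mono inf_le_right inf_le_right

theorem AntitoneOn.exists_tendsto_atTop {f : ℝ → ℝ} {s₀ m : ℝ} (hf : AntitoneOn f (Ici s₀))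
    (hm : ∀ s ≥ s₀, m ≤ f s) : ∃ L, Tendsto f atTop (𝓝 L) := by
  have hmono : Antitone fun s => f (max s₀ s) := fun u v huv =>
    hf (mem_Ici.2 (le_max_left _ _)) (mem_Ici.2 (le_max_left _ _)) (max_le_max le_rfl huv)
  refine ⟨_, (tendsto_atTop_ciInf hmono ⟨m, ?_⟩).congr' ?_⟩
  · rintro _ ⟨s, rfl⟩
    exact hm _ (le_max_left _ _)
  · filter_upwards [eventually_ge_atTop s₀] with s hs
    rw [max_eq_right hs]

theorem tendsto_zero_of_hasDerivAt_of_uniformContinuousOn {F f : ℝ → ℝ} {s₀ L : ℝ}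
    (hF : ∀ t ≥ s₀, HasDerivAt F (f t) t) (hFL : Tendsto F atTop (𝓝 L))
    (hf : UniformContinuousOn f (Ici s₀)) : Tendsto f atTop (𝓝 0) := by
  rw [Metric.tendsto_atTop]
  intro ε hε
  obtain ⟨δ, hδ, hfδ⟩ := Metric.uniformContinuousOn_iff.1 hf (ε / 2) (half_pos hε)
  obtain ⟨N, hN⟩ := Metric.tendsto_atTop.1 hFL (ε * δ / 8) (by positivity)
  refine ⟨max N s₀, fun t ht => ?_⟩
  rw [Real.dist_0_eq_abs]
  by_contra! hft
  have hts₀ : s₀ ≤ t := le_of_max_le_right ht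
  obtain ⟨ξ, hξ, hslope⟩ := exists_hasDerivAt_eq_slope F f (lt_add_of_pos_right t (half_pos hδ))
    (HasDerivAt.continuousOn fun u hu => hF u (hts₀.trans hu.1))
    (fun u hu => hF u (hts₀.trans hu.1.le))
  -- `|f| > ε / 2` on `[t, t + δ / 2]`, so `F` moves by more than `εδ / 4` there.
  have hfξ : ε / 2 < |f ξ| := by
    have := hfδ ξ (mem_Ici.2 (hts₀.trans hξ.1.le)) t (mem_Ici.2 hts₀)
      (by rw [Real.dist_eq, abs_of_pos (by linarith [hξ.1])]; linarith [hξ.2])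
    rw [Real.dist_eq] at this
    linarith [abs_sub_abs_le_abs_sub (f t) (f ξ), abs_sub_comm (f ξ) (f t)]
  have hΔF : ε * δ / 4 < |F (t + δ / 2) - F t| := by
    rw [add_sub_cancel_left, eq_div_iff (half_pos hδ).ne'] at hslope
    rw [← hslope, abs_mul, abs_of_pos (half_pos hδ)]
    nlinarith
  have h₁ := hN t (le_of_max_le_left ht)
  have h₂ := hN (t + δ / 2) (by linarith [le_of_max_le_left ht])
  rw [Real.dist_eq] at h₁ h₂
  have := abs_sub_le (F (t + δ / 2)) L (F t)
  rw [abs_sub_comm L] at this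
  linarith

section ODE

variable {E : Type*} [NormedAddCommGroup E] [NormedSpace ℝ E]

theorem hasDerivWithinAt_update_Iic_of_tendsto {v : E → E} {x : ℝ → E} {a b : ℝ} {p : E}
    (hv : ContinuousAt v p) (hab : a < b) (hx : ∀ t ∈ Ioo a b, HasDerivAt x (v (x t)) t)
    (hlim : Tendsto x (𝓝[<] b) (𝓝 p)) : HasDerivWithinAt (update x b p) (v p) (Iic b) b := by
  have hupd : ∀ t ∈ Ioo a b, update x b p =ᶠ[𝓝 t] x := fun t ht =>
    (eventually_ne_nhds ht.2.ne).mono fun u hu => update_of_ne hu p x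
  refine hasDerivWithinAt_Iic_of_tendsto_deriv (s := Ioo a b)
    (fun t ht =>
      ((hx t ht).congr_of_eventuallyEq (hupd t ht)).differentiableAt.differentiableWithinAt)
    ?_ (Ioo_mem_nhdsLT hab) ?_
  · rw [continuousWithinAt_update_same]
    exact hlim.mono_left (nhdsWithin_mono _ (sdiff_subset.trans Ioo_subset_Iio_self))
  · refine (hv.tendsto.comp hlim).congr' ?_
    filter_upwards [Ioo_mem_nhdsLT hab] with t ht
    exact (((hx t ht).congr_of_eventuallyEq (hupd t ht)).deriv).symm

theorem exists_eqOn_solution_of_tendsto [CompleteSpace E] {v : E → E} {x : ℝ → E} {a b : ℝ}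
    {p : E} (hv : ContDiffAt ℝ 1 v p) (hab : a < b)
    (hx : ∀ t ∈ Ioo a b, HasDerivAt x (v (x t)) t) (hlim : Tendsto x (𝓝[<] b) (𝓝 p)) :
    ∃ ε > 0, ∃ y : ℝ → E, (∀ t ∈ Ioo (b - ε) (b + ε), HasDerivAt y (v (y t)) t) ∧
      EqOn x y (Ioo (b - ε) b) := by
  obtain ⟨y, hyb, ε₁, hε₁, hy⟩ :=
    hv.exists_forall_mem_closedBall_exists_eq_forall_mem_Ioo_hasDerivAt₀ b
  obtain ⟨K, U, hU, hK⟩ := hv.exists_lipschitzOnWith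
  have hyU : ∀ᶠ t in 𝓝 b, y t ∈ U :=
    (hy b ⟨by linarith, by linarith⟩).continuousAt.preimage_mem_nhds (hyb ▸ hU)
  obtain ⟨l, hlb, hl⟩ := mem_nhdsLT_iff_exists_Ioo_subset.1
    (inter_mem (Ioo_mem_nhdsLT hab) ((hlim.eventually_mem hU).and (nhdsWithin_le_nhds hyU)))
  obtain ⟨ε, hε, hεl, hεε₁⟩ : ∃ ε > 0, l < b - ε ∧ ε < ε₁ :=
    ⟨min ((b - l) / 2) (ε₁ / 2), lt_min (by linarith [mem_Iio.1 hlb]) (half_pos hε₁),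
      by linarith [min_le_left ((b - l) / 2) (ε₁ / 2), mem_Iio.1 hlb],
      by linarith [min_le_right ((b - l) / 2) (ε₁ / 2)]⟩
  have hl' : ∀ t ∈ Ioo l b, HasDerivAt (update x b p) (v (update x b p t)) t ∧
      update x b p t ∈ U ∧ y t ∈ U := fun t ht => by
    obtain ⟨htab, hxU, hyU⟩ := hl ht
    rw [update_of_ne ht.2.ne]
    exact ⟨(hx t htab).congr_of_eventuallyEq
      ((eventually_ne_nhds ht.2.ne).mono fun u hu => update_of_ne hu p x), hxU, hyU⟩
  have hxb : HasDerivWithinAt (update x b p) (v (update x b p b)) (Iic b) b := by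
    rw [update_self]; exact hasDerivWithinAt_update_Iic_of_tendsto hv.continuousAt hab hx hlim
  have hIoc : ∀ t ∈ Ioc (b - ε) b, t = b ∨ t ∈ Ioo l b := fun t ht =>
    (eq_or_lt_of_le ht.2).imp id fun h => ⟨by linarith [ht.1], h⟩
  have hyt : ∀ t ∈ Icc (b - ε) b, HasDerivAt y (v (y t)) t := fun t ht =>
    hy t ⟨by linarith [ht.1], by linarith [ht.2]⟩
  refine ⟨ε, hε, y, fun t ht => hy t ⟨?_, ?_⟩, fun t ht => ?_⟩
  · linarith [ht.1]
  · linarith [ht.2]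
  -- Completed by its limit, `x` solves the equation on `(b - ε, b]` with a left derivative at `b`,
  -- so backward uniqueness from `x b = p = y b` applies.
  have huniq := ODE_solution_unique_of_mem_Icc_left (v := fun _ => v) (s := fun _ => U)
    (f := update x b p) (g := y) (a := b - ε) (b := b)
    (fun _ _ => hK) ?_ ?_ ?_ (HasDerivAt.continuousOn hyt)
    (fun t ht => (hyt t (Ioc_subset_Icc_self ht)).hasDerivWithinAt) ?_
    (by rw [update_self, hyb]) ⟨ht.1.le, ht.2.le⟩
  · rwa [update_of_ne ht.2.ne] at huniq
  · intro t ht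
    rcases eq_or_lt_of_le ht.2 with rfl | htb
    · exact hxb.continuousWithinAt.mono Icc_subset_Iic_self
    · exact (hl' t ⟨by linarith [ht.1], htb⟩).1.continuousAt.continuousWithinAt
  · intro t ht
    rcases hIoc t ht with rfl | ht'
    · exact hxb
    · exact (hl' t ht').1.hasDerivWithinAt
  · intro t ht
    rcases hIoc t ht with rfl | ht'
    · rw [update_self]; exact mem_of_mem_nhds hU
    · exact (hl' t ht').2.1
  · intro t ht
    rcases hIoc t ht with rfl | ht'
    · rw [hyb]; exact mem_of_mem_nhds hU
    · exact (hl' t ht').2.2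

theorem eq_top_of_forall_norm_le [ProperSpace E] {v : E → E} (hv : ContDiff ℝ 1 v)
    {x : ℝ → E} {wlo whi : EReal} {s₀ R : ℝ} (hs₀ : wlo < s₀) (hs₀' : (s₀ : EReal) < whi)
    (hx : ∀ t : ℝ, wlo < t → (t : EReal) < whi → HasDerivAt x (v (x t)) t)
    (hR : ∀ t : ℝ, s₀ ≤ t → (t : EReal) < whi → ‖x t‖ ≤ R)
    (hmax : ∀ (whi' : EReal) (y : ℝ → E), whi ≤ whi' →
      (∀ t : ℝ, wlo < t → (t : EReal) < whi' → HasDerivAt y (v (y t)) t) →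
      (∀ t : ℝ, wlo < t → (t : EReal) < whi → y t = x t) → whi' = whi) :
    whi = ⊤ := by
  by_contra htop
  obtain ⟨b, rfl⟩ : ∃ b : ℝ, whi = b :=
    ⟨whi.toReal, (EReal.coe_toReal htop (ne_bot_of_gt hs₀')).symm⟩
  have hs₀b : s₀ < b := EReal.coe_lt_coe_iff.1 hs₀'
  have hxI : ∀ t ∈ Ioo s₀ b, HasDerivAt x (v (x t)) t := fun t ht =>
    hx t (hs₀.trans (EReal.coe_lt_coe_iff.2 ht.1)) (EReal.coe_lt_coe_iff.2 ht.2)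
  obtain ⟨p, hp⟩ := ((convex_Ioo s₀ b).uniformContinuousOn_of_deriv_eq_comp hv.continuous
    (fun t ht => hR t ht.1.le (EReal.coe_lt_coe_iff.2 ht.2)) hxI).exists_tendsto_nhdsWithin
    (by rw [closure_Ioo hs₀b.ne]; exact right_mem_Icc.2 hs₀b.le)
  rw [nhdsWithin_Ioo_eq_nhdsLT hs₀b] at hp
  obtain ⟨ε, hε, y, hy, hxy⟩ := exists_eqOn_solution_of_tendsto hv.contDiffAt hs₀b hxI hp
  have hext := hmax ((b + ε : ℝ) : EReal) (fun t => if t < b then x t else y t)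
    (EReal.coe_le_coe_iff.2 (by linarith)) ?_ fun t _ ht => if_pos (EReal.coe_lt_coe_iff.1 ht)
  · rw [EReal.coe_eq_coe_iff] at hext
    linarith
  intro t ht ht'
  rcases lt_or_ge t b with htb | htb
  · have heq : (fun t => if t < b then x t else y t) =ᶠ[𝓝 t] x := by
      filter_upwards [Iio_mem_nhds htb] with u hu
      exact if_pos hu
    rw [heq.eq_of_nhds]
    exact (hx t ht (EReal.coe_lt_coe_iff.2 htb)).congr_of_eventuallyEq heq
  · have heq : (fun t => if t < b then x t else y t) =ᶠ[𝓝 t] y := by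
      filter_upwards [Ioi_mem_nhds (show b - ε < t by linarith)] with u hu
      split_ifs with hub
      exacts [hxy ⟨hu, hub⟩, rfl]
    rw [heq.eq_of_nhds]
    exact (hy t ⟨by linarith, EReal.coe_lt_coe_iff.1 ht'⟩).congr_of_eventuallyEq heq

end ODE

namespace AlphaTauEta

theorem norm_le_of_invariant {c A T N G : ℝ} (hc : c < 0) (hinv : 2 * A * N + T ^ 2 = -1)
    (hA : A < 0) (hN : 0 < N) (hG : c * A + N ≤ G) : ‖(A, T, N)‖ ≤ G + G / -c := by
  have hcA : 0 < c * A := mul_pos_of_neg_of_neg hc hA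
  have hAG : |A| ≤ G / -c := by
    rw [abs_of_neg hA, le_div_iff₀ (neg_pos.2 hc)]
    linarith
  have hGc : 0 ≤ G / -c := (abs_nonneg A).trans hAG
  have hT : |T| ≤ G + G / -c := by
    refine abs_le_of_sq_le_sq ?_ (by linarith)
    nlinarith [mul_le_mul hAG (show N ≤ G by linarith) hN.le hGc, abs_of_neg hA]
  simp only [Prod.norm_def, Real.norm_eq_abs, abs_of_pos hN]
  exact max_le (by linarith) (max_le hT (by linarith))

def vectorField (a c : ℝ) (p : ℝ × ℝ × ℝ) : ℝ × ℝ × ℝ :=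
  (p.2.1, (c + a * p.2.1) * p.1 - p.2.2, -((c + a * p.2.1) * p.2.1))

theorem contDiff_vectorField (a c : ℝ) : ContDiff ℝ 1 (vectorField a c) := by
  unfold vectorField; fun_prop

def lyapunov (c : ℝ) (α η : ℝ → ℝ) (s : ℝ) : ℝ := c * α s + η s

section System

variable {a c s : ℝ} {α τ η : ℝ → ℝ}

theorem hasDerivAt_lyapunov (hα : HasDerivAt α (τ s) s)
    (hη : HasDerivAt η (-((c + a * τ s) * τ s)) s) :
    HasDerivAt (lyapunov c α η) (-(a * τ s ^ 2)) s :=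
  ((hα.const_mul c).add hη).congr_deriv (by ring)

theorem antitoneOn_lyapunov {J : Set ℝ} (hJ : Convex ℝ J) (ha : 0 ≤ a)
    (hα : ∀ s ∈ J, HasDerivAt α (τ s) s) (hη : ∀ s ∈ J, HasDerivAt η (-((c + a * τ s) * τ s)) s) :
    AntitoneOn (lyapunov c α η) J :=
  antitoneOn_of_hasDerivWithinAt_nonpos hJ
    (HasDerivAt.continuousOn fun s hs => hasDerivAt_lyapunov (hα s hs) (hη s hs))
    (fun s hs => (hasDerivAt_lyapunov (hα s (interior_subset hs))
      (hη s (interior_subset hs))).hasDerivWithinAt)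
    fun s _ => neg_nonpos.2 (by positivity)

theorem hasDerivAt_deriv_tau (hα : HasDerivAt α (τ s) s)
    (hτ : HasDerivAt τ ((c + a * τ s) * α s - η s) s)
    (hη : HasDerivAt η (-((c + a * τ s) * τ s)) s) :
    HasDerivAt (fun s => (c + a * τ s) * α s - η s)
      (a * ((c + a * τ s) * α s - η s) * α s + 2 * ((c + a * τ s) * τ s)) s :=
  (((hτ.const_mul a).const_add c).mul hα |>.sub hη).congr_deriv (by ring)

theorem tendsto_tau_zero (ha : 0 < a) {s₀ R : ℝ} (hα : ∀ s ≥ s₀, HasDerivAt α (τ s) s)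
    (hτ : ∀ s ≥ s₀, HasDerivAt τ ((c + a * τ s) * α s - η s) s)
    (hη : ∀ s ≥ s₀, HasDerivAt η (-((c + a * τ s) * τ s)) s)
    (hR : ∀ s ≥ s₀, ‖(α s, τ s, η s)‖ ≤ R) : Tendsto τ atTop (𝓝 0) := by
  obtain ⟨L, hL⟩ : ∃ L, Tendsto (lyapunov c α η) atTop (𝓝 L) := by
    obtain ⟨C, hC⟩ := exists_forall_norm_comp_le (φ := fun p : ℝ × ℝ × ℝ => c * p.1 + p.2.2)
      (by fun_prop) hR
    exact (antitoneOn_lyapunov (convex_Ici s₀) ha.le hα hη).exists_tendsto_atTop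
      fun s hs => neg_le_of_abs_le (hC s hs)
  have huc : UniformContinuousOn (fun s => -(a * τ s ^ 2)) (Ici s₀) :=
    (convex_Ici s₀).uniformContinuousOn_of_deriv_eq_comp
      (ψ := fun p => -(a * (2 * p.2.1 * ((c + a * p.2.1) * p.1 - p.2.2)))) (by fun_prop) hR
      fun s hs => (((hτ s hs).pow 2).const_mul a).neg.congr_deriv (by ring)
  have hsq : Tendsto (fun s => τ s ^ 2) atTop (𝓝 0) := by
    simpa [ha.ne'] using (tendsto_zero_of_hasDerivAt_of_uniformContinuousOn
      (fun s hs => hasDerivAt_lyapunov (hα s hs) (hη s hs)) hL huc).const_mul (-a⁻¹)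
  rw [tendsto_zero_iff_abs_tendsto_zero]
  simpa [comp_def, Real.sqrt_sq_eq_abs] using (Real.continuous_sqrt.tendsto 0).comp hsq

theorem tendsto_deriv_tau_zero (ha : 0 < a) {s₀ R : ℝ} (hα : ∀ s ≥ s₀, HasDerivAt α (τ s) s)
    (hτ : ∀ s ≥ s₀, HasDerivAt τ ((c + a * τ s) * α s - η s) s)
    (hη : ∀ s ≥ s₀, HasDerivAt η (-((c + a * τ s) * τ s)) s)
    (hR : ∀ s ≥ s₀, ‖(α s, τ s, η s)‖ ≤ R) :
    Tendsto (fun s => (c + a * τ s) * α s - η s) atTop (𝓝 0) :=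
  tendsto_zero_of_hasDerivAt_of_uniformContinuousOn hτ (tendsto_tau_zero ha hα hτ hη hR)
    ((convex_Ici s₀).uniformContinuousOn_of_deriv_eq_comp
      (ψ := fun p => a * ((c + a * p.2.1) * p.1 - p.2.2) * p.1 + 2 * ((c + a * p.2.1) * p.2.1))
      (by fun_prop) hR fun s hs => hasDerivAt_deriv_tau (hα s hs) (hτ s hs) (hη s hs))

theorem tendsto_of_forall_norm_le (ha : 0 < a) {s₀ R : ℝ} (hα : ∀ s ≥ s₀, HasDerivAt α (τ s) s)
    (hτ : ∀ s ≥ s₀, HasDerivAt τ ((c + a * τ s) * α s - η s) s)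
    (hη : ∀ s ≥ s₀, HasDerivAt η (-((c + a * τ s) * τ s)) s)
    (hinv : ∀ s ≥ s₀, 2 * α s * η s + τ s ^ 2 = -1)
    (hR : ∀ s ≥ s₀, ‖(α s, τ s, η s)‖ ≤ R) :
    Tendsto τ atTop (𝓝 0) ∧ Tendsto (fun s => 2 * c * α s ^ 2) atTop (𝓝 (-1)) ∧
      Tendsto (fun s => 2 * η s ^ 2) atTop (𝓝 (-c)) := by
  have hτ0 := tendsto_tau_zero ha hα hτ hη hR
  have hw0 := tendsto_deriv_tau_zero ha hα hτ hη hR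
  have hbdd (φ : ℝ × ℝ × ℝ → ℝ) (hφ : Continuous φ) :
      IsBoundedUnder (· ≤ ·) atTop (norm ∘ fun s => φ (α s, τ s, η s)) :=
    let ⟨C, hC⟩ := exists_forall_norm_comp_le hφ hR
    isBoundedUnder_of_eventually_le ((eventually_ge_atTop s₀).mono hC)
  refine ⟨hτ0, ?_, ?_⟩
  · have h := ((hτ0.zero_mul_isBoundedUnder_le (hbdd (fun p => -(2 * a * p.1 ^ 2) - p.2.1)
      (by fun_prop))).add (hw0.zero_mul_isBoundedUnder_le (hbdd (fun p => 2 * p.1)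
      (by fun_prop)))).const_add (-1)
    rw [add_zero, add_zero] at h
    refine h.congr' ((eventually_ge_atTop s₀).mono fun s hs => ?_)
    linear_combination -hinv s hs
  · have h := ((hτ0.zero_mul_isBoundedUnder_le (hbdd (fun p => -a - (c + a * p.2.1) * p.2.1)
      (by fun_prop))).add (hw0.zero_mul_isBoundedUnder_le (hbdd (fun p => -(2 * p.2.2))
      (by fun_prop)))).const_add (-c)
    rw [add_zero, add_zero] at h
    refine h.congr' ((eventually_ge_atTop s₀).mono fun s hs => ?_)
    linear_combination -(c + a * τ s) * hinv s hs

end System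

end AlphaTauEta

open AlphaTauEta

/-- For `a > 0`, `c < 0`, a solution in `H` on its maximal interval `(ω₋, ω₊)` satisfies
`ω₊ = +∞`, `τ → 0`, `2cα² → -1`, `2η² → -c` as `s → +∞`, i.e. it converges to the
singular point `p = (-1/√(-2c), 0, -c/√(-2c))`.  Maximality is encoded as: no solution
on a larger interval restricts to the given one. -/
theorem stmt_18 (a c : ℝ) (ha : 0 < a) (hc : c < 0) (wlo whi : EReal) (hlt : wlo < whi)
    (α τ η : ℝ → ℝ)
    (hα : ∀ s : ℝ, wlo < (s : EReal) → (s : EReal) < whi → HasDerivAt α (τ s) s)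
    (hτ : ∀ s : ℝ, wlo < (s : EReal) → (s : EReal) < whi →
      HasDerivAt τ ((c + a * τ s) * α s - η s) s)
    (hη : ∀ s : ℝ, wlo < (s : EReal) → (s : EReal) < whi →
      HasDerivAt η (-((c + a * τ s) * τ s)) s)
    (hH : ∀ s : ℝ, wlo < (s : EReal) → (s : EReal) < whi →
      2 * α s * η s + (τ s) ^ 2 = -1 ∧ α s < 0 ∧ 0 < η s)
    (hmax : ∀ (wlo' whi' : EReal) (α' τ' η' : ℝ → ℝ),
      wlo' ≤ wlo → whi ≤ whi' →
      (∀ s : ℝ, wlo' < (s : EReal) → (s : EReal) < whi' →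
        HasDerivAt α' (τ' s) s ∧
        HasDerivAt τ' ((c + a * τ' s) * α' s - η' s) s ∧
        HasDerivAt η' (-((c + a * τ' s) * τ' s)) s) →
      (∀ s : ℝ, wlo < (s : EReal) → (s : EReal) < whi →
        α' s = α s ∧ τ' s = τ s ∧ η' s = η s) →
      wlo' = wlo ∧ whi' = whi) :
    whi = ⊤ ∧
    Filter.Tendsto τ Filter.atTop (nhds 0) ∧
    Filter.Tendsto (fun s => 2 * c * (α s) ^ 2) Filter.atTop (nhds (-1)) ∧
    Filter.Tendsto (fun s => 2 * (η s) ^ 2) Filter.atTop (nhds (-c)) := by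
  obtain ⟨s₀, hws₀, hs₀w⟩ := EReal.exists_between_coe_real hlt
  have hdom {s : ℝ} (hs : s₀ ≤ s) : wlo < s := hws₀.trans_le (EReal.coe_le_coe_iff.2 hs)
  have hR : ∀ s : ℝ, s₀ ≤ s → (s : EReal) < whi →
      ‖(α s, τ s, η s)‖ ≤ lyapunov c α η s₀ + lyapunov c α η s₀ / -c := by
    have hJ : Convex ℝ {s : ℝ | s₀ ≤ s ∧ (s : EReal) < whi} := OrdConnected.convex
      ⟨fun u hu v hv w hw => ⟨hu.1.trans hw.1, (EReal.coe_le_coe_iff.2 hw.2).trans_lt hv.2⟩⟩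
    have hanti := antitoneOn_lyapunov hJ ha.le (fun s hs => hα s (hdom hs.1) hs.2)
      (fun s hs => hη s (hdom hs.1) hs.2)
    intro s hs hsw
    obtain ⟨hinv, hαs, hηs⟩ := hH s (hdom hs) hsw
    exact norm_le_of_invariant hc hinv hαs hηs (hanti ⟨le_rfl, hs₀w⟩ ⟨hs, hsw⟩ hs)
  have hwhi : whi = ⊤ := by
    refine eq_top_of_forall_norm_le (contDiff_vectorField a c) (x := fun s => (α s, τ s, η s))
      hws₀ hs₀w (fun t h₁ h₂ => (hα t h₁ h₂).prodMk ((hτ t h₁ h₂).prodMk (hη t h₁ h₂))) hR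
      fun whi' y hle hy hyx => ?_
    refine (hmax wlo whi' (fun t => (y t).1) (fun t => (y t).2.1) (fun t => (y t).2.2) le_rfl hle
      (fun t h₁ h₂ => ?_) fun t h₁ h₂ => ?_).2
    · have hyt := hy t h₁ h₂
      exact ⟨hyt.fst, hyt.snd.fst, hyt.snd.snd⟩
    · simp [hyx t h₁ h₂]
  subst hwhi
  exact ⟨rfl, tendsto_of_forall_norm_le ha (fun s hs => hα s (hdom hs) (EReal.coe_lt_top s))
    (fun s hs => hτ s (hdom hs) (EReal.coe_lt_top s))
    (fun s hs => hη s (hdom hs) (EReal.coe_lt_top s))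
    (fun s hs => (hH s (hdom hs) (EReal.coe_lt_top s)).1) fun s hs => hR s hs (EReal.coe_lt_top s)⟩
end

section
/- Let (α, τ, η) be a non-trivial solution of α' = τ, τ' = aτα - η, η' = -aτ² (i.e., c = 0) with a > 0 and 2αη + τ² = γ for γ ∈ {-1, 0}, α ≤ 0, η ≥ 0, defined on maximal interval (ω₋, ω₊). Then ω₊ = +∞ and lim_{s→+∞} τ(s) = 0. -/
/-!
If `ω₊ = w` were finite, the solution would stay bounded on `[x, w)`: `η` is non-increasing with
values in `[0, η x]`, `τ' ≤ 0` wherever `τ ≥ 0`, `τ' ≥ -η x` wherever `τ ≤ 0`, and `α' = τ`.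
A bounded solution of an autonomous `C¹` system has a limit at `w`, and the local existence
theorem continues it past `w`, contradicting maximality.

On `[x, ∞)`, `η ≥ 0` and `η' = -aτ²` force `|τ|` to be small at arbitrarily late times. Since
`τ' ≤ 0` wherever `τ ≥ 0`, `τ` never climbs back above a small positive level. Next `η → 0`:
if `η ≥ δ > 0`, the constraint bounds `α` near `τ = 0`, so `τ' ≤ -δ / 2` wherever `τ ≥ -c`, and
`τ` would drop below `-c` for good. Once `η² < aε³ / 2`, multiplying `τ'` by `η` and using
`2αη = γ - τ²` gives `τ' ≥ 0` wherever `τ ≤ -ε`, so `τ` never falls back below `-ε`.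
-/

open Set Filter Topology

theorem sub_le_mul_sub_of_hasDerivAt_le {f f' : ℝ → ℝ} {x y k : ℝ} (hxy : x ≤ y)
    (hf : ∀ s ∈ Icc x y, HasDerivAt f (f' s) s) (hk : ∀ s ∈ Icc x y, f' s ≤ k) :
    f y - f x ≤ k * (y - x) := by
  refine (convex_Icc x y).image_sub_le_mul_sub_of_deriv_le
    (fun s hs => (hf s hs).continuousAt.continuousWithinAt) (fun s hs => ?_) (fun s hs => ?_)
    x (left_mem_Icc.2 hxy) y (right_mem_Icc.2 hxy) hxy
  · exact (hf s (interior_subset hs)).differentiableAt.differentiableWithinAt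
  · rw [(hf s (interior_subset hs)).deriv]
    exact hk s (interior_subset hs)

theorem exists_neg_lt_deriv_of_bddBelow {f f' : ℝ → ℝ} {x m k : ℝ} (hk : 0 < k)
    (hf : ∀ s ≥ x, HasDerivAt f (f' s) s) (hm : ∀ s ≥ x, m ≤ f s) : ∃ s ≥ x, -k < f' s := by
  by_contra! hdec
  set T := (f x - m + 1) / k
  have hT : k * T = f x - m + 1 := mul_div_cancel₀ _ hk.ne'
  have hxT : x ≤ x + T := le_add_of_nonneg_right (div_nonneg (by linarith [hm x le_rfl]) hk.le)
  have := sub_le_mul_sub_of_hasDerivAt_le hxT (fun s hs => hf s hs.1) (fun s hs => hdec s hs.1)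
  rw [add_sub_cancel_left, neg_mul, hT] at this
  linarith [hm _ hxT]

theorem le_of_hasDerivAt_nonpos_of_ge {f f' : ℝ → ℝ} {x y v : ℝ} (hxy : x ≤ y)
    (hf : ∀ s ∈ Icc x y, HasDerivAt f (f' s) s) (hf' : ∀ s ∈ Icc x y, v ≤ f s → f' s ≤ 0)
    (hx : f x ≤ v) : f y ≤ v := by
  refine le_of_forall_pos_lt_add fun δ hδ => ?_
  set c := δ / (y - x + 1)
  have hc : 0 < c := by positivity
  have hB := image_le_of_deriv_right_lt_deriv_boundary (B := fun t => v + c * (t - x))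
    (fun s hs => (hf s hs).continuousAt.continuousWithinAt)
    (fun s hs => (hf s (Ico_subset_Icc_self hs)).hasDerivWithinAt) (by simpa using hx)
    (fun t => ((hasDerivAt_id t).sub_const x |>.const_mul c).const_add v)
    (fun s hs hfs => ?_) (right_mem_Icc.2 hxy)
  · calc f y ≤ v + c * (y - x) := hB
      _ < v + δ := by
        have : c * (y - x + 1) = δ := div_mul_cancel₀ _ (by linarith)
        nlinarith
  · have := hf' s (Ico_subset_Icc_self hs) (by rw [hfs]; nlinarith [hs.1])
    simpa using this.trans_lt hc

theorem UniformContinuousOn.exists_tendsto_nhdsLT {X : Type*} [UniformSpace X] [CompleteSpace X]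
    {u : ℝ → X} {x w : ℝ} (hxw : x < w) (hu : UniformContinuousOn u (Ico x w)) :
    ∃ p, Tendsto u (𝓝[<] w) (𝓝 p) := by
  rw [← nhdsWithin_Ico_eq_nhdsLT hxw]
  have : NeBot (𝓝[Ico x w] w) := by rw [nhdsWithin_Ico_eq_nhdsLT hxw]; infer_instance
  exact CompleteSpace.complete <|
    (cauchy_nhds.mono nhdsWithin_le_nhds).map_of_le hu (le_principal_iff.2 self_mem_nhdsWithin)

section Extension

variable {E : Type*} [NormedAddCommGroup E] [NormedSpace ℝ E] [CompleteSpace E]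

theorem exists_hasDerivAt_extension_of_tendsto {v : E → E} {u : ℝ → E} {x w : ℝ} {p : E}
    (hv : ContDiffAt ℝ 1 v p) (hxw : x < w) (hu : ∀ t ∈ Ioo x w, HasDerivAt u (v (u t)) t)
    (hp : Tendsto u (𝓝[<] w) (𝓝 p)) :
    ∃ ε > 0, ∃ u' : ℝ → E, EqOn u' u (Iio w) ∧ ∀ t ∈ Ico w (w + ε), HasDerivAt u' (v (u' t)) t := by
  obtain ⟨F, hFw, ε, hε, hF⟩ :=
    hv.exists_forall_mem_closedBall_exists_eq_forall_mem_Ioo_hasDerivAt₀ w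
  set u' : ℝ → E := (Iio w).piecewise u F
  have hleft : EqOn u' u (Iio w) := piecewise_eqOn _ _ _
  have hright : EqOn u' F (Ici w) := fun t ht => piecewise_eq_of_notMem _ _ _ (notMem_Iio.2 ht)
  have hu' : ∀ t ∈ Ioo x w, HasDerivAt u' (v (u t)) t := fun t ht =>
    (hu t ht).congr_of_eventuallyEq (hleft.eventuallyEq_of_mem (Iio_mem_nhds ht.2))
  refine ⟨ε, hε, u', hleft, fun t ht => ?_⟩
  rcases ht.1.eq_or_lt with rfl | hwt
  · have hu'w : u' w = p := by rw [hright (le_refl w), hFw]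
    have hl : HasDerivWithinAt u' (v p) (Iic w) w := by
      refine hasDerivWithinAt_Iic_of_tendsto_deriv (s := Ioo x w)
        (fun s hs => (hu' s hs).differentiableAt.differentiableWithinAt) ?_ (Ioo_mem_nhdsLT hxw) ?_
      · rw [ContinuousWithinAt, hu'w]
        exact (hp.mono_left (nhdsWithin_mono _ Ioo_subset_Iio_self)).congr'
          (eventuallyEq_nhdsWithin_of_eqOn fun s hs => (hleft hs.2).symm)
      · refine (hv.continuousAt.tendsto.comp hp).congr' ?_
        filter_upwards [Ioo_mem_nhdsLT hxw] with s hs using (hu' s hs).deriv.symm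
    have hr : HasDerivWithinAt u' (v p) (Ici w) w :=
      hFw ▸ ((hF w ⟨by linarith, by linarith⟩).hasDerivWithinAt.congr hright (hright (le_refl w)))
    rw [hu'w]
    simpa using hl.union hr
  · have : u' =ᶠ[𝓝 t] F := hright.eventuallyEq_of_mem (Ici_mem_nhds hwt)
    rw [this.eq_of_nhds]
    exact (hF t ⟨by linarith, ht.2⟩).congr_of_eventuallyEq this

theorem exists_hasDerivAt_extension_of_isBounded [FiniteDimensional ℝ E] {v : E → E}
    {u : ℝ → E} {x w : ℝ} (hv : ContDiff ℝ 1 v) (hxw : x < w)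
    (hu : ∀ t ∈ Ico x w, HasDerivAt u (v (u t)) t) (hb : Bornology.IsBounded (u '' Ico x w)) :
    ∃ ε > 0, ∃ u' : ℝ → E, EqOn u' u (Iio w) ∧ ∀ t ∈ Ico w (w + ε), HasDerivAt u' (v (u' t)) t := by
  obtain ⟨C, hC⟩ := hb.isCompact_closure.exists_bound_of_continuousOn hv.continuous.continuousOn
  have hlip : LipschitzOnWith C.toNNReal u (Ico x w) :=
    (convex_Ico x w).lipschitzOnWith_of_nnnorm_hasDerivWithin_le
      (fun t ht => (hu t ht).hasDerivWithinAt) fun t ht => by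
        rw [← NNReal.coe_le_coe, coe_nnnorm]
        exact (hC _ (subset_closure (mem_image_of_mem u ht))).trans (le_max_left _ _)
  obtain ⟨p, hp⟩ := hlip.uniformContinuousOn.exists_tendsto_nhdsLT hxw
  exact exists_hasDerivAt_extension_of_tendsto hv.contDiffAt hxw
    (fun t ht => hu t (Ioo_subset_Ico_self ht)) hp

end Extension

theorem hasDerivAt_prod_iff {𝕜 E F : Type*} [NontriviallyNormedField 𝕜] [NormedAddCommGroup E]
    [NormedSpace 𝕜 E] [NormedAddCommGroup F] [NormedSpace 𝕜 F] {f : 𝕜 → E × F} {f' : E × F}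
    {x : 𝕜} : HasDerivAt f f' x ↔
      HasDerivAt (fun t => (f t).1) f'.1 x ∧ HasDerivAt (fun t => (f t).2) f'.2 x :=
  ⟨fun h => ⟨hasFDerivAt_fst.comp_hasDerivAt (f := f) x h,
    hasFDerivAt_snd.comp_hasDerivAt (f := f) x h⟩,
    fun h => h.1.prodMk h.2⟩

def odeField (a : ℝ) (p : ℝ × ℝ × ℝ) : ℝ × ℝ × ℝ :=
  (p.2.1, a * p.2.1 * p.1 - p.2.2, -(a * p.2.1 ^ 2))

theorem contDiff_odeField (a : ℝ) : ContDiff ℝ 1 (odeField a) := by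
  unfold odeField; fun_prop

theorem hasDerivAt_odeField_iff {a s : ℝ} {u : ℝ → ℝ × ℝ × ℝ} :
    HasDerivAt u (odeField a (u s)) s ↔ HasDerivAt (fun t => (u t).1) (u s).2.1 s ∧
      HasDerivAt (fun t => (u t).2.1) (a * (u s).2.1 * (u s).1 - (u s).2.2) s ∧
      HasDerivAt (fun t => (u t).2.2) (-(a * (u s).2.1 ^ 2)) s := by
  rw [hasDerivAt_prod_iff, hasDerivAt_prod_iff (f := fun t => (u t).2)]
  rfl

/-- The paper's solutions of system (*) with `c = 0` lying in `H ∪ C`, restricted to `S`. -/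
structure IsHCSolution (a γ : ℝ) (α τ η : ℝ → ℝ) (S : Set ℝ) : Prop where
  hasDerivAt_α : ∀ s ∈ S, HasDerivAt α (τ s) s
  hasDerivAt_τ : ∀ s ∈ S, HasDerivAt τ (a * τ s * α s - η s) s
  hasDerivAt_η : ∀ s ∈ S, HasDerivAt η (-(a * τ s ^ 2)) s
  constraint : ∀ s ∈ S, 2 * α s * η s + τ s ^ 2 = γ
  α_nonpos : ∀ s ∈ S, α s ≤ 0
  η_nonneg : ∀ s ∈ S, 0 ≤ η s

namespace IsHCSolution

variable {a γ : ℝ} {α τ η : ℝ → ℝ} {S : Set ℝ}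

theorem mono (h : IsHCSolution a γ α τ η S) {T : Set ℝ} (hTS : T ⊆ S) :
    IsHCSolution a γ α τ η T :=
  ⟨fun s hs => h.hasDerivAt_α s (hTS hs), fun s hs => h.hasDerivAt_τ s (hTS hs),
    fun s hs => h.hasDerivAt_η s (hTS hs), fun s hs => h.constraint s (hTS hs),
    fun s hs => h.α_nonpos s (hTS hs), fun s hs => h.η_nonneg s (hTS hs)⟩

variable {x y : ℝ}

theorem η_le (h : IsHCSolution a γ α τ η S) (ha : 0 ≤ a) (hxy : x ≤ y) (hS : Icc x y ⊆ S) :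
    η y ≤ η x := by
  have := sub_le_mul_sub_of_hasDerivAt_le hxy (fun s hs => h.hasDerivAt_η s (hS hs))
    (k := 0) fun s _ => by have := sq_nonneg (τ s); nlinarith
  linarith

theorem τ_le (h : IsHCSolution a γ α τ η S) (ha : 0 ≤ a) (hxy : x ≤ y) (hS : Icc x y ⊆ S)
    {v : ℝ} (hv : 0 ≤ v) (hx : τ x ≤ v) : τ y ≤ v :=
  le_of_hasDerivAt_nonpos_of_ge hxy (fun s hs => h.hasDerivAt_τ s (hS hs)) (fun s hs hvs => by
    have := h.α_nonpos s (hS hs); have := h.η_nonneg s (hS hs)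
    nlinarith [mul_nonneg ha (hv.trans hvs)]) hx

theorem le_τ (h : IsHCSolution a γ α τ η S) (ha : 0 ≤ a) (hxy : x ≤ y) (hS : Icc x y ⊆ S) :
    min (τ x) 0 - η x * (y - x) ≤ τ y := by
  have hηx := h.η_nonneg x (hS (left_mem_Icc.2 hxy))
  have := le_of_hasDerivAt_nonpos_of_ge (f := fun t => -τ t - η x * t)
    (v := -min (τ x) 0 - η x * x) hxy
    (fun s hs => ((h.hasDerivAt_τ s (hS hs)).neg.sub ((hasDerivAt_id s).const_mul (η x))))
    (fun s hs hvs => by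
      have hτs : τ s ≤ 0 := by nlinarith [hs.1, min_le_right (τ x) 0]
      have := h.η_le ha hs.1 ((Icc_subset_Icc_right hs.2).trans hS)
      have := h.α_nonpos s (hS hs)
      simp only [mul_one]
      nlinarith [mul_nonneg ha (neg_nonneg.2 hτs)])
    (by linarith [min_le_left (τ x) 0])
  linarith

theorem isBounded_image_Ico (h : IsHCSolution a γ α τ η (Ico x y)) (ha : 0 ≤ a) (hxy : x < y) :
    Bornology.IsBounded ((fun t => (α t, τ t, η t)) '' Ico x y) := by
  set L := min (τ x) 0 - η x * (y - x)
  have hL : L ≤ 0 := by have := h.η_nonneg x ⟨le_rfl, hxy⟩; nlinarith [min_le_right (τ x) 0]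
  refine (Metric.isBounded_Icc ((α x + L * (y - x), L, 0) : ℝ × ℝ × ℝ)
    (0, max (τ x) 0, η x)).subset ?_
  rintro _ ⟨t, ht, rfl⟩
  have hS : Icc x t ⊆ Ico x y := Icc_subset_Ico_right ht.2
  have hτ : ∀ s ∈ Icc x t, L ≤ τ s := fun s hs => by
    have := h.le_τ ha hs.1 ((Icc_subset_Icc_right hs.2).trans hS)
    nlinarith [h.η_nonneg x ⟨le_rfl, hxy⟩, hs.2, ht.2]
  have hα := sub_le_mul_sub_of_hasDerivAt_le (f := fun s => -α s) ht.1
    (fun s hs => (h.hasDerivAt_α s (hS hs)).neg) (fun s hs => neg_le_neg (hτ s hs))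
  refine ⟨⟨?_, hτ t (right_mem_Icc.2 ht.1), h.η_nonneg t ht⟩, h.α_nonpos t ht,
    h.τ_le ha ht.1 hS (le_max_right _ _) (le_max_left _ _), h.η_le ha ht.1 hS⟩
  nlinarith [ht.2]

theorem hasDerivAt_odeField (h : IsHCSolution a γ α τ η S) {s : ℝ} (hs : s ∈ S) :
    HasDerivAt (fun t => (α t, τ t, η t)) (odeField a (α s, τ s, η s)) s :=
  hasDerivAt_odeField_iff.2 ⟨h.hasDerivAt_α s hs, h.hasDerivAt_τ s hs, h.hasDerivAt_η s hs⟩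

theorem eq_top_of_maximal {wlo whi : EReal} (h : IsHCSolution a γ α τ η {s : ℝ | wlo < s ∧ s < whi})
    (ha : 0 ≤ a) (hlt : wlo < whi)
    (hmax : ∀ (whi' : EReal) (α' τ' η' : ℝ → ℝ), whi ≤ whi' →
      (∀ s : ℝ, wlo < s → s < whi' → HasDerivAt α' (τ' s) s ∧
        HasDerivAt τ' (a * τ' s * α' s - η' s) s ∧ HasDerivAt η' (-(a * τ' s ^ 2)) s) →
      (∀ s : ℝ, wlo < s → s < whi → α' s = α s ∧ τ' s = τ s ∧ η' s = η s) → whi' = whi) :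
    whi = ⊤ := by
  by_contra hne
  lift whi to ℝ using ⟨hne, ne_bot_of_gt hlt⟩ with w
  obtain ⟨x, hxlo, hxw⟩ := EReal.lt_iff_exists_real_btwn.1 hlt
  have hxw : x < w := EReal.coe_lt_coe_iff.1 hxw
  have hsub : Ico x w ⊆ {s : ℝ | wlo < s ∧ (s : EReal) < w} := fun s hs =>
    ⟨hxlo.trans_le (EReal.coe_le_coe_iff.2 hs.1), EReal.coe_lt_coe_iff.2 hs.2⟩
  obtain ⟨ε, hε, u, hu_eq, hu_ext⟩ := exists_hasDerivAt_extension_of_isBounded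
    (contDiff_odeField a) hxw (fun t ht => h.hasDerivAt_odeField (hsub ht))
    ((h.mono hsub).isBounded_image_Ico ha hxw)
  have hsol : ∀ s : ℝ, wlo < s → (s : EReal) < (w + ε : ℝ) → HasDerivAt u (odeField a (u s)) s := by
    intro s hlo hhi
    rcases lt_or_ge s w with hsw | hsw
    · rw [hu_eq hsw]
      exact (h.hasDerivAt_odeField ⟨hlo, EReal.coe_lt_coe_iff.2 hsw⟩).congr_of_eventuallyEq
        (hu_eq.eventuallyEq_of_mem (Iio_mem_nhds hsw))
    · exact hu_ext s ⟨hsw, EReal.coe_lt_coe_iff.1 hhi⟩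
  have := hmax (w + ε : ℝ) (fun t => (u t).1) (fun t => (u t).2.1) (fun t => (u t).2.2)
    (EReal.coe_le_coe_iff.2 (by linarith))
    (fun s hlo hhi => hasDerivAt_odeField_iff.1 (hsol s hlo hhi))
    (fun s _ hhi => by simp only [hu_eq (EReal.coe_lt_coe_iff.1 hhi : s ∈ Iio w), and_self])
  linarith [EReal.coe_eq_coe_iff.1 this]

theorem frequently_abs_τ_lt (h : IsHCSolution a γ α τ η (Ici x)) (ha : 0 < a) {c : ℝ}
    (hc : 0 < c) : ∃ᶠ s in atTop, |τ s| < c := by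
  refine frequently_atTop.2 fun y => ?_
  obtain ⟨s, hs, hτs⟩ := exists_neg_lt_deriv_of_bddBelow (x := max x y) (m := 0)
    (mul_pos ha (pow_pos hc 2)) (fun s hs => h.hasDerivAt_η s (le_of_max_le_left hs))
    (fun s hs => h.η_nonneg s (le_of_max_le_left hs))
  exact ⟨s, le_of_max_le_right hs, abs_lt_of_sq_lt_sq (by nlinarith) hc.le⟩

theorem eventually_τ_lt (h : IsHCSolution a γ α τ η (Ici x)) (ha : 0 < a) {ε : ℝ}
    (hε : 0 < ε) : ∀ᶠ s in atTop, τ s < ε := by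
  obtain ⟨s₁, hτs₁, hs₁⟩ :=
    ((h.frequently_abs_τ_lt ha (half_pos hε)).and_eventually (eventually_ge_atTop x)).exists
  filter_upwards [eventually_ge_atTop s₁] with s hs
  exact (h.τ_le ha.le hs (fun t ht => hs₁.trans ht.1) (half_pos hε).le
    (abs_lt.1 hτs₁).2.le).trans_lt (half_lt_self hε)

theorem τ_deriv_le (h : IsHCSolution a γ α τ η S) (ha : 0 < a) (hγ : γ ≤ 0) {s δ c : ℝ}
    (hs : s ∈ S) (hδ : 0 < δ) (hδη : δ ≤ η s) (hc : c ≤ 1) (hca : a * c * (1 - γ) ≤ δ ^ 2)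
    (hτ : -c ≤ τ s) : a * τ s * α s - η s ≤ -(δ / 2) := by
  have hα := h.α_nonpos s hs
  rcases le_or_gt 0 (τ s) with hτ0 | hτ0
  · nlinarith [mul_nonneg (mul_nonneg ha.le hτ0) (neg_nonneg.2 hα)]
  have hη : 0 < η s := hδ.trans_le hδη
  have key : η s * (a * τ s * α s) ≤ η s * (δ / 2) := calc
    η s * (a * τ s * α s) = a * -τ s * (τ s ^ 2 - γ) / 2 := by
      linear_combination (a * τ s / 2) * h.constraint s hs
    _ ≤ a * c * (1 - γ) / 2 := by
      have : τ s ^ 2 ≤ 1 := by nlinarith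
      gcongr <;> nlinarith
    _ ≤ η s * (δ / 2) := by nlinarith
  linarith [le_of_mul_le_mul_left key hη]

theorem exists_η_lt (h : IsHCSolution a γ α τ η (Ici x)) (ha : 0 < a) (hγ : γ ≤ 0) {δ : ℝ}
    (hδ : 0 < δ) : ∃ s ≥ x, η s < δ := by
  by_contra! hηδ
  set c := min 1 (δ ^ 2 / (a * (1 - γ)))
  have hc : 0 < c := lt_min one_pos (div_pos (pow_pos hδ 2) (mul_pos ha (by linarith)))
  have hca : a * c * (1 - γ) ≤ δ ^ 2 := by
    rw [mul_assoc, mul_comm c, ← mul_assoc, ← le_div_iff₀' (by nlinarith)]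
    exact min_le_right _ _
  have hdec : ∀ s ≥ x, -c ≤ τ s → a * τ s * α s - η s ≤ -(δ / 2) := fun s hs hτ =>
    h.τ_deriv_le ha hγ hs hδ (hηδ s hs) (min_le_left _ _) hca hτ
  obtain ⟨s₁, hs₁, hτs₁⟩ : ∃ s₁ ≥ x, τ s₁ < -c := by
    by_contra! hτ
    obtain ⟨s, hs, hlt⟩ := exists_neg_lt_deriv_of_bddBelow (half_pos hδ) h.hasDerivAt_τ hτ
    linarith [hdec s hs (hτ s hs)]
  obtain ⟨s, hτs, hs⟩ :=
    ((h.frequently_abs_τ_lt ha hc).and_eventually (eventually_ge_atTop s₁)).exists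
  have := le_of_hasDerivAt_nonpos_of_ge hs (fun t ht => h.hasDerivAt_τ t (hs₁.trans ht.1))
    (fun t ht hτt => (hdec t (hs₁.trans ht.1) hτt).trans (by linarith)) hτs₁.le
  linarith [(abs_lt.1 hτs).1]

theorem tendsto_η_atTop (h : IsHCSolution a γ α τ η (Ici x)) (ha : 0 < a) (hγ : γ ≤ 0) :
    Tendsto η atTop (𝓝 0) := by
  refine tendsto_order.2 ⟨fun b hb => ?_, fun b hb => ?_⟩
  · filter_upwards [eventually_ge_atTop x] with s hs using hb.trans_le (h.η_nonneg s hs)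
  · obtain ⟨s₀, hs₀, hη⟩ := h.exists_η_lt ha hγ hb
    filter_upwards [eventually_ge_atTop s₀] with s hs using
      (h.η_le ha.le hs fun t ht => hs₀.trans ht.1).trans_lt hη

theorem τ_deriv_nonneg (h : IsHCSolution a γ α τ η S) (ha : 0 < a) (hγ : γ ≤ 0) {s ε : ℝ}
    (hs : s ∈ S) (hε : 0 ≤ ε) (hτ : τ s ≤ -ε) (hη : η s * η s ≤ a * ε ^ 3 / 2) :
    0 ≤ a * τ s * α s - η s := by
  have hα := h.α_nonpos s hs
  have haτ : 0 ≤ a * -τ s := mul_nonneg ha.le (by linarith)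
  rcases (h.η_nonneg s hs).eq_or_lt with hη0 | hη0
  · rw [← hη0]
    nlinarith [mul_nonneg haτ (neg_nonneg.2 hα)]
  refine (mul_nonneg_iff_of_pos_left hη0).1 ?_
  have hcube : ε ^ 3 ≤ (-τ s) ^ 3 := pow_le_pow_left₀ hε (by linarith) 3
  have hγτ : 0 ≤ a * τ s * γ := by nlinarith
  have : η s * (a * τ s * α s - η s) = a * τ s * γ / 2 + a * (-τ s) ^ 3 / 2 - η s * η s := by
    linear_combination (a * τ s / 2) * h.constraint s hs
  nlinarith [mul_le_mul_of_nonneg_left hcube ha.le]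

theorem eventually_neg_lt_τ (h : IsHCSolution a γ α τ η (Ici x)) (ha : 0 < a) (hγ : γ ≤ 0)
    {ε : ℝ} (hε : 0 < ε) : ∀ᶠ s in atTop, -ε < τ s := by
  have hη := h.tendsto_η_atTop ha hγ
  have hsmall : ∀ᶠ s in atTop, x ≤ s ∧ η s * η s ≤ a * (ε / 2) ^ 3 / 2 :=
    (eventually_ge_atTop x).and <| (hη.mul hη).eventually <| ge_mem_nhds <| by
      rw [mul_zero]; positivity
  obtain ⟨y, hy⟩ := eventually_atTop.1 hsmall
  obtain ⟨s₁, hτs₁, hs₁⟩ :=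
    ((h.frequently_abs_τ_lt ha (half_pos hε)).and_eventually (eventually_ge_atTop y)).exists
  filter_upwards [eventually_ge_atTop s₁] with s hs
  have := le_of_hasDerivAt_nonpos_of_ge (f := fun t => -τ t) (v := ε / 2) hs
    (fun t ht => (h.hasDerivAt_τ t (hy t (hs₁.trans ht.1)).1).neg)
    (fun t ht hτt => by
      have := h.τ_deriv_nonneg ha hγ (hy t (hs₁.trans ht.1)).1 (half_pos hε).le (by linarith)
        (hy t (hs₁.trans ht.1)).2
      linarith)
    (by linarith [(abs_lt.1 hτs₁).1])
  linarith [half_lt_self hε]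

theorem tendsto_τ_atTop (h : IsHCSolution a γ α τ η (Ici x)) (ha : 0 < a) (hγ : γ ≤ 0) :
    Tendsto τ atTop (𝓝 0) :=
  tendsto_order.2 ⟨fun b hb => by simpa using h.eventually_neg_lt_τ ha hγ (neg_pos.2 hb),
    fun b hb => h.eventually_τ_lt ha hb⟩

end IsHCSolution

theorem stmt_19_general (a γ : ℝ) (ha : 0 < a) (hγ : γ = -1 ∨ γ = 0)
    (wlo whi : EReal) (hlt : wlo < whi) (α τ η : ℝ → ℝ)
    (hα : ∀ s : ℝ, wlo < (s : EReal) → (s : EReal) < whi → HasDerivAt α (τ s) s)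
    (hτ : ∀ s : ℝ, wlo < (s : EReal) → (s : EReal) < whi →
      HasDerivAt τ (a * τ s * α s - η s) s)
    (hη : ∀ s : ℝ, wlo < (s : EReal) → (s : EReal) < whi →
      HasDerivAt η (-(a * (τ s) ^ 2)) s)
    (hHC : ∀ s : ℝ, wlo < (s : EReal) → (s : EReal) < whi →
      2 * α s * η s + (τ s) ^ 2 = γ ∧ α s ≤ 0 ∧ 0 ≤ η s)
    (hmax : ∀ (wlo' whi' : EReal) (α' τ' η' : ℝ → ℝ),
      wlo' ≤ wlo → whi ≤ whi' →
      (∀ s : ℝ, wlo' < (s : EReal) → (s : EReal) < whi' →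
        HasDerivAt α' (τ' s) s ∧
        HasDerivAt τ' (a * τ' s * α' s - η' s) s ∧
        HasDerivAt η' (-(a * (τ' s) ^ 2)) s) →
      (∀ s : ℝ, wlo < (s : EReal) → (s : EReal) < whi →
        α' s = α s ∧ τ' s = τ s ∧ η' s = η s) →
      wlo' = wlo ∧ whi' = whi) :
    whi = ⊤ ∧ Filter.Tendsto τ Filter.atTop (nhds 0) := by
  have h : IsHCSolution a γ α τ η {s : ℝ | wlo < s ∧ s < whi} :=
    ⟨fun s hs => hα s hs.1 hs.2, fun s hs => hτ s hs.1 hs.2, fun s hs => hη s hs.1 hs.2,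
      fun s hs => (hHC s hs.1 hs.2).1, fun s hs => (hHC s hs.1 hs.2).2.1,
      fun s hs => (hHC s hs.1 hs.2).2.2⟩
  have hγ_nonpos : γ ≤ 0 := by rcases hγ with rfl | rfl <;> norm_num
  have htop : whi = ⊤ := h.eq_top_of_maximal ha.le hlt fun whi' α' τ' η' hle hsol hagree =>
    (hmax wlo whi' α' τ' η' le_rfl hle hsol hagree).2
  obtain ⟨x, hx, -⟩ := EReal.lt_iff_exists_real_btwn.1 hlt
  have hIci : Ici x ⊆ {s : ℝ | wlo < s ∧ s < whi} := fun s hs =>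
    ⟨hx.trans_le (EReal.coe_le_coe_iff.2 hs), htop ▸ EReal.coe_lt_top s⟩
  exact ⟨htop, (h.mono hIci).tendsto_τ_atTop ha hγ_nonpos⟩

/-- For `c = 0`, `a > 0`, a non-trivial solution of `α' = τ`, `τ' = aτα - η`, `η' = -aτ²`
lying in `H ∪ C` (so `2αη + τ² = γ ∈ {-1,0}`, `α ≤ 0`, `η ≥ 0`) on its maximal interval
`(ω₋, ω₊)` satisfies `ω₊ = +∞` and `τ(s) → 0` as `s → +∞`. -/
theorem stmt_19 (a γ : ℝ) (ha : 0 < a) (hγ : γ = -1 ∨ γ = 0)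
    (wlo whi : EReal) (hlt : wlo < whi) (α τ η : ℝ → ℝ)
    (hα : ∀ s : ℝ, wlo < (s : EReal) → (s : EReal) < whi → HasDerivAt α (τ s) s)
    (hτ : ∀ s : ℝ, wlo < (s : EReal) → (s : EReal) < whi →
      HasDerivAt τ (a * τ s * α s - η s) s)
    (hη : ∀ s : ℝ, wlo < (s : EReal) → (s : EReal) < whi →
      HasDerivAt η (-(a * (τ s) ^ 2)) s)
    (hHC : ∀ s : ℝ, wlo < (s : EReal) → (s : EReal) < whi →
      2 * α s * η s + (τ s) ^ 2 = γ ∧ α s ≤ 0 ∧ 0 ≤ η s)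
    (hnt : ¬ ∃ b : ℝ, ∀ s : ℝ, wlo < (s : EReal) → (s : EReal) < whi → τ s = b)
    (hmax : ∀ (wlo' whi' : EReal) (α' τ' η' : ℝ → ℝ),
      wlo' ≤ wlo → whi ≤ whi' →
      (∀ s : ℝ, wlo' < (s : EReal) → (s : EReal) < whi' →
        HasDerivAt α' (τ' s) s ∧
        HasDerivAt τ' (a * τ' s * α' s - η' s) s ∧
        HasDerivAt η' (-(a * (τ' s) ^ 2)) s) →
      (∀ s : ℝ, wlo < (s : EReal) → (s : EReal) < whi →
        α' s = α s ∧ τ' s = τ s ∧ η' s = η s) →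
      wlo' = wlo ∧ whi' = whi) :
    whi = ⊤ ∧ Filter.Tendsto τ Filter.atTop (nhds 0) :=
  stmt_19_general a γ ha hγ wlo whi hlt α τ η hα hτ hη hHC hmax
end
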